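/- arXiv:1702.07283 — 6 statements merged into one kernel-verified Lean document; each statement's English description precedes it below -/
import Mathlib

section
/- Let k ≥ 2 and m ≥ 1 be integers and let a be a real number with 0 < a < k/2. Let V be a chi-square random variable with k degrees of freedom and let Z₁,…,Z_m be standard normal N(0,1) random variables, with V, Z₁,…,Z_m jointly independent. Then P( (k/V)·max_{1≤j≤m} Z_j² ≥ 2a ) ≤ 2^{3/2}·m·e^{−a/2} / ( √(πa)·(1 − 1/k) ). -/
/-!
By a union bound it suffices to bound `P(c V ≤ Z²)`, `c = 2a/k`, for a single standard normal `Z`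
independent of `V`. Conditionally on `V = v`, Mills' ratio gives
`P(Z² ≥ c v) ≤ √(2/π) (c v)^(-1/2) e^(-c v/2)`, and the expectation of `V^(-1/2) e^(-c V/2)`
under the law `Γ(k/2, 1/2)` is again a Gamma integral. The resulting constant is bounded using
`Γ(x + 1/2) ≤ √x Γ(x)` (log-convexity of `Γ`) and `(1 + 2a/k)^((k-1)/2) ≥ e^(a/2 - 1/4)`.
-/

open MeasureTheory ProbabilityTheory Real Set Filter
open scoped ENNReal Topology

lemma gaussianPDFReal_zero_one (x : ℝ) :
    gaussianPDFReal 0 1 x = (√(2 * π))⁻¹ * exp (-x ^ 2 / 2) := by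
  simp [gaussianPDFReal]

lemma integrable_mul_gaussianPDFReal : Integrable (fun x ↦ x * gaussianPDFReal 0 1 x) := by
  simp_rw [gaussianPDFReal_zero_one]
  convert (integrable_mul_exp_neg_mul_sq (b := 1 / 2) (by norm_num)).const_mul (√(2 * π))⁻¹
    using 2 with x
  ring_nf

lemma integral_Ioi_mul_gaussianPDFReal (t : ℝ) :
    ∫ x in Ioi t, x * gaussianPDFReal 0 1 x = gaussianPDFReal 0 1 t := by
  have hderiv (x : ℝ) :
      HasDerivAt (fun y ↦ -gaussianPDFReal 0 1 y) (x * gaussianPDFReal 0 1 x) x := by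
    have h : HasDerivAt (fun y : ℝ ↦ -y ^ 2 / 2) (-x) x :=
      ((hasDerivAt_pow 2 x).neg.div_const 2).congr_deriv (by push_cast; ring)
    simp_rw [gaussianPDFReal_zero_one]
    exact (h.exp.const_mul (√(2 * π))⁻¹).neg.congr_deriv (by ring)
  have hlim : Tendsto (fun y ↦ -gaussianPDFReal 0 1 y) atTop (𝓝 0) := by
    simp_rw [gaussianPDFReal_zero_one]
    have : Tendsto (fun y : ℝ ↦ -y ^ 2 / 2) atTop atBot :=
      (tendsto_neg_atTop_atBot.comp (tendsto_pow_atTop two_ne_zero)).atBot_div_const two_pos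
    simpa using ((tendsto_exp_atBot.comp this).const_mul (√(2 * π))⁻¹).neg
  rw [integral_Ioi_of_hasDerivAt_of_tendsto' (fun x _ ↦ hderiv x)
    integrable_mul_gaussianPDFReal.integrableOn hlim]
  ring

lemma gaussianReal_Ici_le {t : ℝ} (ht : 0 < t) :
    gaussianReal 0 1 (Ici t) ≤ ENNReal.ofReal (gaussianPDFReal 0 1 t / t) := by
  rw [gaussianReal_apply_eq_integral 0 one_ne_zero, integral_Ici_eq_integral_Ioi]
  refine ENNReal.ofReal_le_ofReal ?_
  calc ∫ x in Ioi t, gaussianPDFReal 0 1 x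
      ≤ ∫ x in Ioi t, x * gaussianPDFReal 0 1 x / t := by
        refine setIntegral_mono_on (integrable_gaussianPDFReal 0 1).integrableOn
          (integrable_mul_gaussianPDFReal.div_const t).integrableOn measurableSet_Ioi
          fun x hx ↦ ?_
        rw [le_div_iff₀ ht, mul_comm]
        exact mul_le_mul_of_nonneg_right (le_of_lt hx) (gaussianPDFReal_nonneg 0 1 x)
    _ = gaussianPDFReal 0 1 t / t := by
        rw [integral_div, integral_Ioi_mul_gaussianPDFReal]

lemma gaussianReal_setOf_le_sq_le {x : ℝ} (hx : 0 < x) :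
    gaussianReal 0 1 {z | x ≤ z ^ 2} ≤
      ENNReal.ofReal (√(2 / π) * x ^ (-(1 / 2) : ℝ) * exp (-x / 2)) := by
  have ht : 0 < √x := sqrt_pos.mpr hx
  have hset : {z : ℝ | x ≤ z ^ 2} = (fun z ↦ -z) ⁻¹' Ici √x ∪ Ici √x := by
    ext z
    rw [mem_ofPred_eq, ← sqrt_le_sqrt_iff (sq_nonneg z), sqrt_sq_eq_abs, le_abs, or_comm]
    rfl
  have hsymm : gaussianReal 0 1 ((fun z ↦ -z) ⁻¹' Ici √x) = gaussianReal 0 1 (Ici √x) := by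
    rw [← Measure.map_apply measurable_neg measurableSet_Ici, gaussianReal_map_neg, neg_zero]
  have hφt : 0 ≤ gaussianPDFReal 0 1 √x / √x :=
    div_nonneg (gaussianPDFReal_nonneg 0 1 _) ht.le
  calc gaussianReal 0 1 {z | x ≤ z ^ 2}
      ≤ gaussianReal 0 1 (Ici √x) + gaussianReal 0 1 (Ici √x) := by
        rw [hset]
        exact (measure_union_le _ _).trans_eq (by rw [hsymm])
    _ ≤ ENNReal.ofReal (gaussianPDFReal 0 1 √x / √x + gaussianPDFReal 0 1 √x / √x) := by
        rw [ENNReal.ofReal_add hφt hφt]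
        exact add_le_add (gaussianReal_Ici_le ht) (gaussianReal_Ici_le ht)
    _ = _ := by
        congr 1
        rw [gaussianPDFReal_zero_one, sq_sqrt hx.le, rpow_neg hx.le, ← sqrt_eq_rpow,
          sqrt_div' _ pi_pos.le, sqrt_mul' _ pi_pos.le]
        field_simp
        norm_num

lemma ae_pos_gammaMeasure (α β : ℝ) : ∀ᵐ v ∂gammaMeasure α β, 0 < v := by
  rw [gammaMeasure,
    ae_withDensity_iff (f := gammaPDF α β) (measurable_gammaPDFReal α β).ennreal_ofReal]
  filter_upwards [compl_mem_ae_iff.mpr (measure_singleton (0 : ℝ))] with v hv0 hv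
  exact lt_of_le_of_ne (not_lt.mp fun h ↦ hv (gammaPDF_of_neg h)) (Ne.symm hv0)

lemma gammaPDFReal_mul_rpow_mul_exp {α β p γ v : ℝ} (hαp : 0 < α + p) (hβγ : 0 < β + γ)
    (hv : 0 < v) :
    gammaPDFReal α β v * (v ^ p * exp (-(γ * v))) =
      β ^ α * Gamma (α + p) / (Gamma α * (β + γ) ^ (α + p)) *
        gammaPDFReal (α + p) (β + γ) v := by
  have hpow : v ^ (α - 1) * v ^ p = v ^ (α + p - 1) := by
    rw [← rpow_add hv]; ring_nf
  have hexp : exp (-(β * v)) * exp (-(γ * v)) = exp (-((β + γ) * v)) := by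
    rw [← exp_add]; ring_nf
  have hΓ : Gamma (α + p) ≠ 0 := (Gamma_pos_of_pos hαp).ne'
  have hβγp : (β + γ) ^ (α + p) ≠ 0 := (rpow_pos_of_pos hβγ _).ne'
  simp only [gammaPDFReal, if_pos hv.le]
  rw [← hpow, ← hexp]
  field_simp

lemma lintegral_gammaMeasure_rpow_mul_exp {α β p γ : ℝ} (hα : 0 < α) (hβ : 0 < β)
    (hαp : 0 < α + p) (hβγ : 0 < β + γ) :
    ∫⁻ v, ENNReal.ofReal (v ^ p * exp (-(γ * v))) ∂gammaMeasure α β =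
      ENNReal.ofReal (β ^ α * Gamma (α + p) / (Gamma α * (β + γ) ^ (α + p))) := by
  set C := β ^ α * Gamma (α + p) / (Gamma α * (β + γ) ^ (α + p))
  have hC : 0 ≤ C := by positivity
  have hpdf : Measurable (gammaPDF α β) := (measurable_gammaPDFReal α β).ennreal_ofReal
  rw [gammaMeasure, lintegral_withDensity_eq_lintegral_mul _ hpdf (by fun_prop)]
  calc ∫⁻ v, (gammaPDF α β * fun v ↦ ENNReal.ofReal (v ^ p * exp (-(γ * v)))) v
      = ∫⁻ v, ENNReal.ofReal C * gammaPDF (α + p) (β + γ) v := by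
        refine lintegral_congr_ae ?_
        filter_upwards [compl_mem_ae_iff.mpr (measure_singleton (0 : ℝ))] with v hv0
        rcases (show v ≠ 0 from hv0).lt_or_gt with hv | hv
        · simp only [Pi.mul_apply, gammaPDF_of_neg hv, zero_mul, mul_zero]
        · rw [Pi.mul_apply, gammaPDF, gammaPDF,
            ← ENNReal.ofReal_mul (gammaPDFReal_nonneg hα hβ v), ← ENNReal.ofReal_mul hC,
            gammaPDFReal_mul_rpow_mul_exp hαp hβγ hv]
    _ = ENNReal.ofReal C := by
        rw [lintegral_const_mul (f := gammaPDF _ _) _ (measurable_gammaPDFReal _ _).ennreal_ofReal,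
          lintegral_gammaPDF_eq_one hαp hβγ, mul_one]

lemma ProbabilityTheory.IndepFun.measure_pair_mem_eq_lintegral {Ω α β : Type*}
    [MeasurableSpace Ω] [MeasurableSpace α] [MeasurableSpace β] {P : Measure Ω}
    [IsFiniteMeasure P] {X : Ω → α} {Y : Ω → β} (hXY : IndepFun X Y P) (hX : Measurable X)
    (hY : Measurable Y) {S : Set (α × β)} (hS : MeasurableSet S) :
    P {ω | (X ω, Y ω) ∈ S} = ∫⁻ x, P.map Y (Prod.mk x ⁻¹' S) ∂P.map X := by
  rw [← Measure.prod_apply hS, ← (indepFun_iff_map_prod_eq_prod_map_map hX.aemeasurable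
    hY.aemeasurable).mp hXY, Measure.map_apply (hX.prodMk hY) hS]
  rfl

lemma measure_mul_le_sq_le_of_gamma_of_gaussian {Ω : Type*} [MeasurableSpace Ω]
    {P : Measure Ω} [IsFiniteMeasure P] {V Z : Ω → ℝ} {α β c : ℝ}
    (hVm : Measurable V) (hZm : Measurable Z) (hVZ : IndepFun V Z P)
    (hV : P.map V = gammaMeasure α β) (hZ : P.map Z = gaussianReal 0 1)
    (hα : 1 / 2 < α) (hβ : 0 < β) (hc : 0 < c) :
    P {ω | c * V ω ≤ Z ω ^ 2} ≤ ENNReal.ofReal (√(2 / π) * c ^ (-(1 / 2) : ℝ) *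
      (β ^ α * Gamma (α - 1 / 2) / (Gamma α * (β + c / 2) ^ (α - 1 / 2)))) := by
  have hS : MeasurableSet {q : ℝ × ℝ | c * q.1 ≤ q.2 ^ 2} :=
    measurableSet_le (by fun_prop) (by fun_prop)
  calc P {ω | c * V ω ≤ Z ω ^ 2}
      = ∫⁻ v, gaussianReal 0 1 {z | c * v ≤ z ^ 2} ∂gammaMeasure α β := by
        rw [← hV, ← hZ]
        exact hVZ.measure_pair_mem_eq_lintegral hVm hZm hS
    _ ≤ ∫⁻ v, ENNReal.ofReal (√(2 / π) * c ^ (-(1 / 2) : ℝ)) *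
          ENNReal.ofReal (v ^ (-(1 / 2) : ℝ) * exp (-(c / 2 * v))) ∂gammaMeasure α β := by
        refine lintegral_mono_ae ?_
        filter_upwards [ae_pos_gammaMeasure α β] with v hv
        rw [← ENNReal.ofReal_mul (by positivity)]
        convert gaussianReal_setOf_le_sq_le (mul_pos hc hv) using 2
        rw [mul_rpow hc.le hv.le]
        ring_nf
    _ = _ := by
        rw [lintegral_const_mul' _ _ ENNReal.ofReal_ne_top, lintegral_gammaMeasure_rpow_mul_exp
          (by linarith) hβ (by linarith) (by linarith), ← ENNReal.ofReal_mul (by positivity),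
          sub_eq_add_neg]

lemma Real.Gamma_add_half_le_sqrt_mul_Gamma {x : ℝ} (hx : 0 < x) :
    Gamma (x + 1 / 2) ≤ √x * Gamma x := by
  have hΓ : 0 ≤ Gamma x := (Gamma_pos_of_pos hx).le
  calc Gamma (x + 1 / 2) = Gamma (1 / 2 * x + 1 / 2 * (x + 1)) := by ring_nf
    _ ≤ Gamma x ^ (1 / 2 : ℝ) * Gamma (x + 1) ^ (1 / 2 : ℝ) :=
      Gamma_mul_add_mul_le_rpow_Gamma_mul_rpow_Gamma hx (by linarith) (by norm_num)
        (by norm_num) (by norm_num)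
    _ = √x * Gamma x := by
      rw [Gamma_add_one hx.ne', ← sqrt_eq_rpow, ← sqrt_eq_rpow, sqrt_mul hx.le,
        mul_left_comm, mul_self_sqrt hΓ]

lemma exp_sub_le_one_add_rpow {k a : ℝ} (hk : 1 ≤ k) (ha : 0 ≤ a) (hak : a ≤ k / 2) :
    exp (a / 2 - 1 / 4) ≤ (1 + 2 * a / k) ^ ((k - 1) / 2) := by
  have hk0 : 0 < k := by linarith
  have hc : 0 < 1 + 2 * a / k := by positivity
  rw [rpow_def_of_pos hc, exp_le_exp]
  calc a / 2 - 1 / 4 ≤ (k - 1) / 2 * (1 - (1 + 2 * a / k)⁻¹) := by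
        rw [← sub_nonneg]
        have : 0 ≤ (2 * a + 1) * (k - 2 * a) / (4 * (k + 2 * a)) := by
          apply div_nonneg <;> nlinarith
        convert this using 1
        field_simp
        ring
    _ ≤ (k - 1) / 2 * log (1 + 2 * a / k) := by
        gcongr
        exact one_sub_inv_le_log_of_pos hc
    _ = log (1 + 2 * a / k) * ((k - 1) / 2) := mul_comm _ _

lemma exp_one_fourth_le_two_rpow_three_halves : exp (1 / 4) ≤ 2 ^ ((3 : ℝ) / 2) :=
  calc exp (1 / 4) ≤ 1 / (1 - 1 / 4) :=
        exp_bound_div_one_sub_of_interval (by norm_num) (by norm_num)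
    _ ≤ 2 ^ (1 : ℝ) := by norm_num
    _ ≤ 2 ^ ((3 : ℝ) / 2) := rpow_le_rpow_of_exponent_le one_le_two (by norm_num)

lemma chiSq_gaussian_tail_const_le {k a : ℝ} (hk : 1 < k) (ha : 0 < a) (hak : a ≤ k / 2) :
    √(2 / π) * (2 * a / k) ^ (-(1 / 2) : ℝ) *
        ((1 / 2) ^ (k / 2) * Gamma (k / 2 - 1 / 2) /
          (Gamma (k / 2) * (1 / 2 + 2 * a / k / 2) ^ (k / 2 - 1 / 2))) ≤
      2 ^ ((3 : ℝ) / 2) * exp (-a / 2) / (√(π * a) * (1 - 1 / k)) := by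
  have hk0 : 0 < k := by linarith
  set s := k / 2 - 1 / 2 with hs_def
  have hs : 0 < s := by linarith
  have hQ : 0 < 1 + 2 * a / k := by positivity
  have hΓ : s * Gamma s ≤ √(k / 2) * Gamma (k / 2) := by
    rw [← Gamma_add_one hs.ne', show s + 1 = k / 2 + 1 / 2 by ring]
    exact Gamma_add_half_le_sqrt_mul_Gamma (by positivity)
  have hE : exp (a / 2 - 1 / 4) ≤ (1 + 2 * a / k) ^ s := by
    rw [show s = (k - 1) / 2 by ring]
    exact exp_sub_le_one_add_rpow hk.le ha.le hak
  have hbase : (1 / 2 + 2 * a / k / 2) ^ s = (1 / 2 : ℝ) ^ s * (1 + 2 * a / k) ^ s := by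
    rw [← mul_rpow (by norm_num) hQ.le]
    ring_nf
  have hhalf : (1 / 2 : ℝ) ^ (k / 2) = √(1 / 2) * (1 / 2 : ℝ) ^ s := by
    rw [show k / 2 = 1 / 2 + s by ring, rpow_add (by norm_num), sqrt_eq_rpow]
  have hratio : Gamma s / (Gamma (k / 2) * (1 + 2 * a / k) ^ s) ≤
      √(k / 2) / (s * exp (a / 2 - 1 / 4)) := by
    rw [div_le_div_iff₀ (by positivity) (by positivity)]
    have hΓk : 0 < Gamma (k / 2) := Gamma_pos_of_pos (by positivity)
    nlinarith [mul_le_mul hΓ hE (exp_pos _).le (by positivity)]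
  have hconst : √(2 / π) * (2 * a / k) ^ (-(1 / 2) : ℝ) * √(1 / 2) * √(k / 2) =
      k / (2 * √(π * a)) := by
    have hsq : 2 / π * (k / (2 * a)) * (1 / 2) * (k / 2) = (k / (2 * √(π * a))) ^ 2 := by
      rw [div_pow, mul_pow, sq_sqrt (by positivity)]
      field_simp
    rw [rpow_neg (by positivity), ← sqrt_eq_rpow, ← sqrt_inv, inv_div,
      ← sqrt_mul (by positivity), ← sqrt_mul (by positivity), ← sqrt_mul (by positivity), hsq,
      sqrt_sq (by positivity)]
  calc √(2 / π) * (2 * a / k) ^ (-(1 / 2) : ℝ) *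
        ((1 / 2) ^ (k / 2) * Gamma s / (Gamma (k / 2) * (1 / 2 + 2 * a / k / 2) ^ s))
      = √(2 / π) * (2 * a / k) ^ (-(1 / 2) : ℝ) * √(1 / 2) *
          (Gamma s / (Gamma (k / 2) * (1 + 2 * a / k) ^ s)) := by
        rw [hbase, hhalf]
        field_simp
    _ ≤ √(2 / π) * (2 * a / k) ^ (-(1 / 2) : ℝ) * √(1 / 2) *
          (√(k / 2) / (s * exp (a / 2 - 1 / 4))) :=
        mul_le_mul_of_nonneg_left hratio (by positivity)
    _ = exp (1 / 4) * exp (-a / 2) / (√(π * a) * (1 - 1 / k)) := by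
        rw [← mul_div_assoc, hconst, sub_eq_add_neg, exp_add, neg_div, exp_neg, exp_neg, hs_def]
        field_simp
    _ ≤ 2 ^ ((3 : ℝ) / 2) * exp (-a / 2) / (√(π * a) * (1 - 1 / k)) := by
        have hk1 : 0 < 1 - 1 / k := by rw [sub_pos, div_lt_one hk0]; exact hk
        gcongr
        exact exp_one_fourth_le_two_rpow_three_halves

lemma exists_div_mul_le_of_le_div_mul_iSup {ι : Type*} [Finite ι] [Nonempty ι] {f : ι → ℝ}
    (hf : ∀ i, 0 ≤ f i) {b c v : ℝ} (hb : 0 < b) (hc : 0 < c) (h : b ≤ c / v * ⨆ i, f i) :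
    ∃ i, b / c * v ≤ f i := by
  have hM : 0 ≤ ⨆ i, f i := Real.iSup_nonneg hf
  have hv : 0 < v := by
    by_contra! hv
    linarith [mul_nonpos_of_nonpos_of_nonneg (div_nonpos_of_nonneg_of_nonpos hc.le hv) hM]
  obtain ⟨i, hi⟩ := exists_eq_ciSup_of_finite (f := f)
  refine ⟨i, ?_⟩
  rw [hi, div_mul_eq_mul_div, div_le_iff₀ hc]
  rw [div_mul_eq_mul_div, le_div_iff₀ hv] at h
  linarith

/-- If `V ~ χ²_k` and `Z₁, …, Z_m` are standard normals, all jointly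
independent, then for `0 < a < k/2`,
`P((k/V) · max_j Z_j² ≥ 2a) ≤ 2^{3/2} m e^{-a/2} / (√(πa) (1 - 1/k))`. -/
theorem chiSq_max_gaussian_ratio_tail_bound
    {Ω : Type*} [MeasurableSpace Ω] (P : Measure Ω) [IsProbabilityMeasure P]
    (k m : ℕ) (hk : 2 ≤ k) (hm : 1 ≤ m)
    (a : ℝ) (ha : 0 < a) (hak : a < (k : ℝ) / 2)
    (V : Ω → ℝ) (Z : Fin m → Ω → ℝ)
    (hVmeas : Measurable V) (hZmeas : ∀ j, Measurable (Z j))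
    (hV : Measure.map V P = gammaMeasure ((k : ℝ) / 2) (1 / 2))
    (hZ : ∀ j, Measure.map (Z j) P = gaussianReal 0 1)
    (hindep : iIndepFun
      (Fin.cases (motive := fun _ => Ω → ℝ) V Z) P) :
    P {ω | 2 * a ≤ (k : ℝ) / V ω * (⨆ j : Fin m, (Z j ω) ^ 2)} ≤
      ENNReal.ofReal (2 ^ ((3 : ℝ) / 2) * m * Real.exp (-a / 2) /
        (Real.sqrt (π * a) * (1 - 1 / (k : ℝ)))) := by
  have hk1 : (1 : ℝ) < k := by exact_mod_cast hk
  have : Nonempty (Fin m) := ⟨⟨0, hm⟩⟩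
  have hevent : {ω | 2 * a ≤ (k : ℝ) / V ω * (⨆ j : Fin m, (Z j ω) ^ 2)} ⊆
      ⋃ j, {ω | 2 * a / k * V ω ≤ Z j ω ^ 2} := fun ω hω ↦
    mem_iUnion.mpr (exists_div_mul_le_of_le_div_mul_iSup (fun j ↦ sq_nonneg _) (by positivity)
      (by positivity) hω)
  have hcoord (j : Fin m) : P {ω | 2 * a / k * V ω ≤ Z j ω ^ 2} ≤
      ENNReal.ofReal (2 ^ ((3 : ℝ) / 2) * exp (-a / 2) / (√(π * a) * (1 - 1 / k))) := by
    have hVZ : IndepFun V (Z j) P := by simpa using hindep.indepFun (Fin.succ_ne_zero j).symm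
    exact (measure_mul_le_sq_le_of_gamma_of_gaussian hVmeas (hZmeas j) hVZ hV (hZ j)
      (by linarith) one_half_pos (by positivity)).trans
      (ENNReal.ofReal_le_ofReal (chiSq_gaussian_tail_const_le hk1 ha hak.le))
  calc _ ≤ ∑ j, P {ω | 2 * a / k * V ω ≤ Z j ω ^ 2} :=
        (measure_mono hevent).trans (measure_iUnion_fintype_le _ _)
    _ ≤ ∑ _ : Fin m,
          ENNReal.ofReal (2 ^ ((3 : ℝ) / 2) * exp (-a / 2) / (√(π * a) * (1 - 1 / k))) :=
        Finset.sum_le_sum fun j _ ↦ hcoord j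
    _ = _ := by
        rw [Finset.sum_const, Finset.card_univ, Fintype.card_fin, nsmul_eq_mul,
          ← ENNReal.ofReal_natCast, ← ENNReal.ofReal_mul (Nat.cast_nonneg m)]
        ring_nf
end

section
/- Let n, m be positive integers with m < n, let X be an n×p real matrix and X_M an n×m real matrix with X_MᵀX_M invertible; set H := X_M(X_MᵀX_M)⁻¹X_Mᵀ and Λ := tr((HX)ᵀ(HX)), and assume Λ > 0. Let σ > 0, ε > 0, μ ∈ ℝ^m, let L be an m×m real matrix with LLᵀ = (X_MᵀX_M)⁻¹, let Z be a standard Gaussian vector in ℝ^m, and define β̂ := μ + σ·L·Z (so β̂ has the N(μ, σ²(X_MᵀX_M)⁻¹) distribution). Then P( (1/2)·‖Xᵀ X_M (β̂ − μ)‖₂² ≥ ε/9 ) ≤ (3·m·σ·√Λ / √(πε)) · e^{−ε/(9σ²Λ)}. -/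
/-!
Write `β̂ - μ = σ L Z` and `B = Xᵀ X_M L`, so that the quantity in question is `σ² ‖B Z‖² / 2`.
Diagonalizing `BᵀB = ∑ λᵢ vᵢ vᵢᵀ` gives `‖B Z‖² = ∑ λᵢ ⟪vᵢ, Z⟫²` with `λᵢ ≥ 0` and
`∑ λᵢ = tr (BᵀB) = Λ` (because `L Lᵀ = (X_MᵀX_M)⁻¹`), and each `⟪vᵢ, Z⟫` is standard normal since
`vᵢ` is a unit vector. A `λ`-weighted average of the `⟪vᵢ, Z⟫²` reaches `a²` only if one of them
does, so a union bound over the `m` eigendirections together with the Mills-ratio tail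
`P(|N| ≥ a) ≤ 2 φ(a) / a`, at `a² = 2ε / (9σ²Λ)`, gives the claim.
-/

open MeasureTheory ProbabilityTheory Real Matrix Filter Set Topology
open scoped NNReal ENNReal

section GaussianTail

lemma hasDerivAt_neg_exp_neg_sq_div_two (x : ℝ) :
    HasDerivAt (fun x ↦ -exp (-x ^ 2 / 2)) (x * exp (-x ^ 2 / 2)) x := by
  refine (((hasDerivAt_pow 2 x).fun_neg.div_const 2).exp).fun_neg.congr_deriv ?_
  norm_num
  ring

lemma tendsto_neg_exp_neg_sq_div_two_atTop :
    Tendsto (fun x : ℝ ↦ -exp (-x ^ 2 / 2)) atTop (𝓝 0) := by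
  have := tendsto_exp_neg_atTop_nhds_zero.comp
    ((tendsto_pow_atTop two_ne_zero).atTop_div_const two_pos)
  simpa [neg_div] using this.neg

variable {a : ℝ}

lemma integrableOn_Ioi_mul_exp_neg_sq_div_two (ha : 0 ≤ a) :
    IntegrableOn (fun x ↦ x * exp (-x ^ 2 / 2)) (Ioi a) :=
  integrableOn_Ioi_deriv_of_nonneg' (fun x _ ↦ hasDerivAt_neg_exp_neg_sq_div_two x)
    (fun _ hx ↦ mul_nonneg (ha.trans hx.out.le) (exp_pos _).le)
    tendsto_neg_exp_neg_sq_div_two_atTop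

lemma integral_Ioi_mul_exp_neg_sq_div_two (ha : 0 ≤ a) :
    ∫ x in Ioi a, x * exp (-x ^ 2 / 2) = exp (-a ^ 2 / 2) := by
  rw [integral_Ioi_of_hasDerivAt_of_nonneg' (fun x _ ↦ hasDerivAt_neg_exp_neg_sq_div_two x)
    (fun x hx ↦ mul_nonneg (ha.trans hx.out.le) (exp_pos _).le)
    tendsto_neg_exp_neg_sq_div_two_atTop]
  ring

lemma gaussianReal_Ici_le_s2 (ha : 0 < a) :
    gaussianReal 0 1 (Ici a) ≤ ENNReal.ofReal (exp (-a ^ 2 / 2) / (a * √(2 * π))) := by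
  have hpdf : ∀ x ∈ Ioi a, gaussianPDF 0 1 x ≤
      ENNReal.ofReal ((a * √(2 * π))⁻¹ * (x * exp (-x ^ 2 / 2))) := by
    intro x (hx : a < x)
    refine ENNReal.ofReal_le_ofReal ?_
    have : 1 ≤ x / a := (one_le_div ha).mpr hx.le
    calc gaussianPDFReal 0 1 x = 1 * ((√(2 * π))⁻¹ * exp (-x ^ 2 / 2)) := by
          simp [gaussianPDFReal]
      _ ≤ x / a * ((√(2 * π))⁻¹ * exp (-x ^ 2 / 2)) := by gcongr
      _ = (a * √(2 * π))⁻¹ * (x * exp (-x ^ 2 / 2)) := by field_simp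
  calc gaussianReal 0 1 (Ici a) = ∫⁻ x in Ioi a, gaussianPDF 0 1 x := by
        rw [gaussianReal_apply 0 one_ne_zero, setLIntegral_congr Ioi_ae_eq_Ici]
    _ ≤ ∫⁻ x in Ioi a, ENNReal.ofReal ((a * √(2 * π))⁻¹ * (x * exp (-x ^ 2 / 2))) :=
        setLIntegral_mono (by fun_prop) hpdf
    _ = ENNReal.ofReal ((a * √(2 * π))⁻¹ * exp (-a ^ 2 / 2)) := by
        rw [← ofReal_integral_eq_lintegral_ofReal
          ((integrableOn_Ioi_mul_exp_neg_sq_div_two ha.le).const_mul _),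
          integral_const_mul, integral_Ioi_mul_exp_neg_sq_div_two ha.le]
        filter_upwards [ae_restrict_mem measurableSet_Ioi] with x (hx : a < x)
        have := ha.trans hx
        positivity
    _ = _ := by rw [inv_mul_eq_div]

lemma gaussianReal_setOf_le_abs_le (ha : 0 < a) :
    gaussianReal 0 1 {x | a ≤ |x|} ≤ ENNReal.ofReal (2 * exp (-a ^ 2 / 2) / (a * √(2 * π))) := by
  have hsymm : gaussianReal 0 1 (Iic (-a)) = gaussianReal 0 1 (Ici a) := by
    conv_lhs =>
      rw [← neg_zero, ← gaussianReal_map_neg, Measure.map_apply measurable_neg measurableSet_Iic]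
    simp
  have hsplit : {x : ℝ | a ≤ |x|} = Iic (-a) ∪ Ici a := by
    ext x
    simp [le_abs', or_comm]
  calc gaussianReal 0 1 {x | a ≤ |x|} ≤ gaussianReal 0 1 (Ici a) + gaussianReal 0 1 (Ici a) := by
        rw [hsplit]
        refine (measure_union_le _ _).trans_eq ?_
        rw [hsymm]
    _ ≤ _ := by
        grw [gaussianReal_Ici_le_s2 ha, ← ENNReal.ofReal_add (by positivity) (by positivity), ← two_mul,
          mul_div_assoc]

end GaussianTail

section StandardGaussian

variable {Ω ι : Type*} [MeasurableSpace Ω] {P : Measure Ω} {Z : ι → Ω → ℝ}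

lemma map_sum_mul_eq_gaussianReal (hZ : ∀ j, P.map (Z j) = gaussianReal 0 1)
    (hindep : iIndepFun Z P) (c : ι → ℝ) (s : Finset ι) :
    P.map (fun ω ↦ ∑ j ∈ s, c j * Z j ω) = gaussianReal 0 (∑ j ∈ s, ‖c j‖₊ ^ 2) := by
  classical
  have := hindep.isProbabilityMeasure
  have hZae (j : ι) : AEMeasurable (Z j) P :=
    .of_map_ne_zero (by rw [hZ]; exact IsProbabilityMeasure.ne_zero _)
  have hmap (j : ι) : P.map (fun ω ↦ c j * Z j ω) = gaussianReal 0 (‖c j‖₊ ^ 2) := by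
    rw [← Function.comp_def (c j * ·),
      ← AEMeasurable.map_map_of_aemeasurable (by fun_prop) (hZae j), hZ,
      gaussianReal_map_const_mul]
    congr 1
    · ring
    · ext
      simp
  induction s using Finset.cons_induction with
  | empty => simp [gaussianReal_zero_var]
  | cons j s hj ih =>
    have hindep' : IndepFun (fun ω ↦ c j * Z j ω) (∑ k ∈ s, fun ω ↦ c k * Z k ω) P :=
      ((hindep.comp (fun j x ↦ c j * x) fun j ↦ measurable_const_mul _)
        |>.indepFun_finsetSum_of_notMem₀ (fun k ↦ (hZae k).const_mul _) hj).symm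
    simp only [Finset.sum_cons]
    rw [← zero_add (0 : ℝ)]
    convert gaussianReal_add_gaussianReal_of_indepFun hindep' (hmap j) ?_ using 2
    · ext ω
      simp
    · convert ih using 2
      ext ω
      simp

lemma map_dotProduct_eq_gaussianReal [Fintype ι] (hZ : ∀ j, P.map (Z j) = gaussianReal 0 1)
    (hindep : iIndepFun Z P) {v : EuclideanSpace ℝ ι} (hv : ‖v‖ = 1) :
    P.map (fun ω ↦ ⇑v ⬝ᵥ fun j ↦ Z j ω) = gaussianReal 0 1 := by
  have hv' : ∑ j, ‖v j‖₊ ^ 2 = 1 := by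
    rw [← NNReal.sq_sqrt (∑ j, ‖v j‖₊ ^ 2), ← EuclideanSpace.nnnorm_eq, ← NNReal.coe_eq_one,
      NNReal.coe_pow, coe_nnnorm, hv, one_pow]
  simpa [dotProduct, hv'] using map_sum_mul_eq_gaussianReal hZ hindep v Finset.univ

end StandardGaussian

lemma measure_iUnion_le_abs_le_of_map_eq_gaussianReal {Ω ι : Type*} [Fintype ι]
    [MeasurableSpace Ω] {P : Measure Ω} {Y : ι → Ω → ℝ}
    (hY : ∀ i, P.map (Y i) = gaussianReal 0 1) {a : ℝ} (ha : 0 < a) :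
    P (⋃ i, {ω | a ≤ |Y i ω|}) ≤
      Fintype.card ι * ENNReal.ofReal (2 * exp (-a ^ 2 / 2) / (a * √(2 * π))) := by
  have htail (i : ι) :
      P {ω | a ≤ |Y i ω|} ≤ ENNReal.ofReal (2 * exp (-a ^ 2 / 2) / (a * √(2 * π))) := by
    have hYae : AEMeasurable (Y i) P :=
      .of_map_ne_zero (by rw [hY]; exact IsProbabilityMeasure.ne_zero _)
    rw [show {ω | a ≤ |Y i ω|} = Y i ⁻¹' {x | a ≤ |x|} from rfl,
      ← Measure.map_apply_of_aemeasurable hYae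
      (measurableSet_le measurable_const measurable_abs), hY]
    exact gaussianReal_setOf_le_abs_le ha
  calc P (⋃ i, {ω | a ≤ |Y i ω|}) ≤ ∑ i, P {ω | a ≤ |Y i ω|} := measure_iUnion_fintype_le P _
    _ ≤ _ := by
      grw [Finset.sum_le_sum fun i _ ↦ htail i]
      simp

lemma Matrix.dotProduct_transpose_mul_self_mulVec {ι κ R : Type*} [Fintype ι] [Fintype κ]
    [CommSemiring R] (B : Matrix κ ι R) (z : ι → R) :
    z ⬝ᵥ ((Bᵀ * B) *ᵥ z) = ∑ k, (B *ᵥ z) k ^ 2 := by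
  rw [← mulVec_mulVec, dotProduct_mulVec, vecMul_transpose]
  simp only [dotProduct, sq]

section Spectral

variable {ι : Type*} [Fintype ι]

lemma exists_le_abs_of_sum_mul_le_sum_mul_sq {w y : ι → ℝ} (hw : ∀ i, 0 ≤ w i)
    (hpos : 0 < ∑ i, w i) {a : ℝ} (h : (∑ i, w i) * a ^ 2 ≤ ∑ i, w i * y i ^ 2) :
    ∃ i, a ≤ |y i| := by
  by_contra! hlt
  obtain ⟨i₀, -, hi₀⟩ :=
    Finset.exists_lt_of_sum_lt (f := fun _ ↦ (0 : ℝ)) (g := w) (s := .univ) (by simpa using hpos)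
  have hsq (i : ι) : y i ^ 2 < a ^ 2 := by
    simpa only [sq_abs] using pow_lt_pow_left₀ (hlt i) (abs_nonneg _) two_ne_zero
  have : ∑ i, w i * y i ^ 2 < ∑ i, w i * a ^ 2 :=
    Finset.sum_lt_sum (fun i _ ↦ mul_le_mul_of_nonneg_left (hsq i).le (hw i))
      ⟨i₀, Finset.mem_univ _, mul_lt_mul_of_pos_left (hsq i₀) hi₀⟩
  rw [← Finset.sum_mul] at this
  linarith

variable [DecidableEq ι]

lemma Matrix.IsHermitian.dotProduct_mulVec_eq_sum_eigenvalues_mul_sq {A : Matrix ι ι ℝ}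
    (hA : A.IsHermitian) (z : ι → ℝ) :
    z ⬝ᵥ (A *ᵥ z) = ∑ i, hA.eigenvalues i * (⇑(hA.eigenvectorBasis i) ⬝ᵥ z) ^ 2 := by
  set U : Matrix ι ι ℝ := (hA.eigenvectorUnitary : Matrix ι ι ℝ)
  have hcoord : star U *ᵥ z = fun i ↦ ⇑(hA.eigenvectorBasis i) ⬝ᵥ z := by
    ext i
    simp [U, mulVec, dotProduct, star_apply]
  have hdiag : A = U * diagonal hA.eigenvalues * star U := by
    conv_lhs => rw [hA.spectral_theorem]
    simp [U, Unitary.conjStarAlgAut_apply]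
  conv_lhs => rw [hdiag]
  rw [← mulVec_mulVec, ← mulVec_mulVec, dotProduct_mulVec, ← mulVec_transpose,
    ← conjTranspose_eq_transpose_of_trivial, ← star_eq_conjTranspose, hcoord]
  simp only [dotProduct, mulVec_diagonal, sq]
  exact Finset.sum_congr rfl fun i _ ↦ by ring

lemma Matrix.PosSemidef.exists_le_abs_eigenvectorBasis_dotProduct {A : Matrix ι ι ℝ}
    (hA : A.PosSemidef) (htr : 0 < A.trace) (z : ι → ℝ) {a : ℝ}
    (h : A.trace * a ^ 2 ≤ z ⬝ᵥ (A *ᵥ z)) :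
    ∃ i, a ≤ |⇑(hA.isHermitian.eigenvectorBasis i) ⬝ᵥ z| := by
  have htr_eq : A.trace = ∑ i, hA.isHermitian.eigenvalues i := by
    simpa using hA.isHermitian.trace_eq_sum_eigenvalues
  rw [htr_eq] at htr h
  rw [hA.isHermitian.dotProduct_mulVec_eq_sum_eigenvalues_mul_sq] at h
  exact exists_le_abs_of_sum_mul_le_sum_mul_sq hA.eigenvalues_nonneg htr h

end Spectral

lemma measure_le_sum_sq_mulVec_le {Ω ι κ : Type*} [Fintype ι] [DecidableEq ι] [Fintype κ]
    [MeasurableSpace Ω] {P : Measure Ω} {Z : ι → Ω → ℝ}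
    (hZ : ∀ j, P.map (Z j) = gaussianReal 0 1) (hindep : iIndepFun Z P) (B : Matrix κ ι ℝ)
    (hB : 0 < trace (Bᵀ * B)) {a : ℝ} (ha : 0 < a) :
    P {ω | trace (Bᵀ * B) * a ^ 2 ≤ ∑ k, (B *ᵥ fun j ↦ Z j ω) k ^ 2} ≤
      Fintype.card ι * ENNReal.ofReal (2 * exp (-a ^ 2 / 2) / (a * √(2 * π))) := by
  have hpsd : (Bᵀ * B).PosSemidef := by
    simpa [conjTranspose_eq_transpose_of_trivial] using posSemidef_conjTranspose_mul_self B
  set v := hpsd.isHermitian.eigenvectorBasis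
  have hsub : {ω | trace (Bᵀ * B) * a ^ 2 ≤ ∑ k, (B *ᵥ fun j ↦ Z j ω) k ^ 2} ⊆
      ⋃ i, {ω | a ≤ |⇑(v i) ⬝ᵥ fun j ↦ Z j ω|} := fun ω hω ↦ by
    rw [mem_ofPred_eq, ← dotProduct_transpose_mul_self_mulVec] at hω
    exact mem_iUnion.mpr (hpsd.exists_le_abs_eigenvectorBasis_dotProduct hB _ hω)
  exact (measure_mono hsub).trans <| measure_iUnion_le_abs_le_of_map_eq_gaussianReal
    (fun i ↦ map_dotProduct_eq_gaussianReal hZ hindep (v.orthonormal.1 i)) ha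

lemma Matrix.trace_transpose_mul_self_hat_mul_eq {ι κ τ : Type*} [Fintype ι] [Fintype κ]
    [Fintype τ] [DecidableEq κ] (X : Matrix ι τ ℝ) (XM : Matrix ι κ ℝ) (hXM : IsUnit (XMᵀ * XM).det)
    (L : Matrix κ κ ℝ) (hL : L * Lᵀ = (XMᵀ * XM)⁻¹) :
    trace ((XM * (XMᵀ * XM)⁻¹ * XMᵀ * X)ᵀ * (XM * (XMᵀ * XM)⁻¹ * XMᵀ * X)) =
      trace ((Xᵀ * XM * L)ᵀ * (Xᵀ * XM * L)) := by
  have hsymm : ((XMᵀ * XM)⁻¹)ᵀ = (XMᵀ * XM)⁻¹ := by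
    rw [transpose_nonsing_inv, transpose_mul, transpose_transpose]
  rw [trace_mul_comm (Xᵀ * XM * L)ᵀ]
  simp only [transpose_mul, transpose_transpose, hsymm, Matrix.mul_assoc]
  rw [← Matrix.mul_assoc L, hL, ← Matrix.mul_assoc XMᵀ XM, ← Matrix.mul_assoc (XMᵀ * XM)⁻¹,
    nonsing_inv_mul _ hXM, Matrix.one_mul]

theorem least_squares_concentration_general
    {Ω : Type*} [MeasurableSpace Ω] (P : Measure Ω)
    (n m p : ℕ)
    (X : Matrix (Fin n) (Fin p) ℝ) (XM : Matrix (Fin n) (Fin m) ℝ)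
    (hXM : IsUnit (XMᵀ * XM).det)
    (H : Matrix (Fin n) (Fin n) ℝ) (hH : H = XM * (XMᵀ * XM)⁻¹ * XMᵀ)
    (Λ : ℝ) (hΛdef : Λ = Matrix.trace ((H * X)ᵀ * (H * X))) (hΛ : 0 < Λ)
    (σ : ℝ) (hσ : 0 < σ) (ε : ℝ) (hε : 0 < ε) (μ : Fin m → ℝ)
    (L : Matrix (Fin m) (Fin m) ℝ) (hL : L * Lᵀ = (XMᵀ * XM)⁻¹)
    (Z : Fin m → Ω → ℝ)
    (hZ : ∀ j, Measure.map (Z j) P = gaussianReal 0 1)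
    (hindep : iIndepFun Z P)
    (βhat : Ω → Fin m → ℝ)
    (hβhat : ∀ ω, βhat ω = μ + σ • (L *ᵥ fun j => Z j ω)) :
    P {ω | ε / 9 ≤ 1 / 2 * ∑ i, (Xᵀ *ᵥ (XM *ᵥ (βhat ω - μ))) i ^ 2} ≤
      ENNReal.ofReal (3 * m * σ * Real.sqrt Λ / Real.sqrt (π * ε) *
        Real.exp (-ε / (9 * σ ^ 2 * Λ))) := by
  set B := Xᵀ * XM * L
  have htr : trace (Bᵀ * B) = Λ := by
    rw [hΛdef, hH, trace_transpose_mul_self_hat_mul_eq X XM hXM L hL]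
  set a := √(2 * ε) / (3 * σ * √Λ)
  have ha_sq : a ^ 2 = 2 * ε / (9 * σ ^ 2 * Λ) := by
    rw [div_pow, mul_pow, mul_pow, sq_sqrt (by positivity), sq_sqrt hΛ.le]
    ring
  have hsub : {ω | ε / 9 ≤ 1 / 2 * ∑ i, (Xᵀ *ᵥ (XM *ᵥ (βhat ω - μ))) i ^ 2} ⊆
      {ω | trace (Bᵀ * B) * a ^ 2 ≤ ∑ k, (B *ᵥ fun j ↦ Z j ω) k ^ 2} := by
    intro ω (hω : ε / 9 ≤ _)
    have hvec : Xᵀ *ᵥ (XM *ᵥ (βhat ω - μ)) = σ • (B *ᵥ fun j ↦ Z j ω) := by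
      rw [hβhat, add_sub_cancel_left, mulVec_smul, mulVec_smul, mulVec_mulVec, mulVec_mulVec]
    simp only [hvec, Pi.smul_apply, smul_eq_mul, mul_pow, ← Finset.mul_sum] at hω
    rw [mem_ofPred_eq, htr, ha_sq, ← le_div_iff₀' hΛ, div_le_iff₀ (by positivity)]
    field_simp
    linarith
  have hprod : √(2 * ε) * √(2 * π) = 2 * √(π * ε) := by
    rw [← sqrt_mul (by positivity), show 2 * ε * (2 * π) = 2 ^ 2 * (π * ε) by ring,
      sqrt_mul (by positivity), sqrt_sq zero_le_two]
  refine (measure_mono hsub).trans <|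
    (measure_le_sum_sq_mulVec_le hZ hindep B (htr ▸ hΛ) (by positivity)).trans_eq ?_
  rw [Fintype.card_fin, ← ENNReal.ofReal_natCast, ← ENNReal.ofReal_mul (by positivity), ha_sq,
    div_mul_eq_mul_div, hprod]
  congr 1
  field_simp

/-- Lemma 2 of Williams–Hannig. Concentration of the least squares
estimator `β̂ = μ + σ·L·Z ~ N(μ, σ²(X_MᵀX_M)⁻¹)` around its mean `μ`. -/
theorem least_squares_concentration
    {Ω : Type*} [MeasurableSpace Ω] (P : Measure Ω) [IsProbabilityMeasure P]
    (n m p : ℕ) (hm : 0 < m) (hmn : m < n)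
    (X : Matrix (Fin n) (Fin p) ℝ) (XM : Matrix (Fin n) (Fin m) ℝ)
    (hXM : IsUnit (XMᵀ * XM).det)
    (H : Matrix (Fin n) (Fin n) ℝ) (hH : H = XM * (XMᵀ * XM)⁻¹ * XMᵀ)
    (Λ : ℝ) (hΛdef : Λ = Matrix.trace ((H * X)ᵀ * (H * X))) (hΛ : 0 < Λ)
    (σ : ℝ) (hσ : 0 < σ) (ε : ℝ) (hε : 0 < ε) (μ : Fin m → ℝ)
    (L : Matrix (Fin m) (Fin m) ℝ) (hL : L * Lᵀ = (XMᵀ * XM)⁻¹)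
    (Z : Fin m → Ω → ℝ)
    (hZmeas : ∀ j, Measurable (Z j))
    (hZ : ∀ j, Measure.map (Z j) P = gaussianReal 0 1)
    (hindep : iIndepFun Z P)
    (βhat : Ω → Fin m → ℝ)
    (hβhat : ∀ ω, βhat ω = μ + σ • (L *ᵥ fun j => Z j ω)) :
    P {ω | ε / 9 ≤ 1 / 2 * ∑ i, (Xᵀ *ᵥ (XM *ᵥ (βhat ω - μ))) i ^ 2} ≤
      ENNReal.ofReal (3 * m * σ * Real.sqrt Λ / Real.sqrt (π * ε) *
        Real.exp (-ε / (9 * σ ^ 2 * Λ))) :=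
  least_squares_concentration_general P n m p X XM hXM H hH Λ hΛdef hΛ σ hσ ε hε μ L hL Z hZ hindep
    βhat hβhat
end

section
/- Let d₁, d₂ ≥ 1 be integers, let a > 1 be a real number, and let V₁ and V₂ be independent chi-square random variables with d₁ and d₂ degrees of freedom respectively. Then P( V₁ > (a−1)·V₂ ) ≤ e^{−(d₂/e²)·(a−1)/4 + d₁/2} + e^{−d₂/2}/√(π·d₂). -/
/-!
Union bound over the events `V₂ ≤ t` and `V₁ > (a - 1) t`, with `t = d₂ / e²`.

The upper tail of `χ²_{d₁}` is a Chernoff bound, obtained by comparing the `Gamma(k, 1/2)` density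
with the `Gamma(k, 1/4)` density beyond the threshold.

For the lower tail, `e^{-u/2} ≤ 1` gives `P(χ²_d ≤ t) ≤ (t/2)^{d/2} / Γ(d/2 + 1)`, and Stirling's
lower bound `Γ(x + 1) ≥ √(2πx) (x/e)^x`, valid for every real `x ≥ 0` (the degrees of freedom
may be odd), turns this into `e^{-d/2} / √(π d)` at `t = d / e²`.
-/

open MeasureTheory ProbabilityTheory Real Set Filter Topology
open scoped Nat

namespace Real

/-- The real-variable analogue of `Stirling.stirlingSeq`. It decreases along `x + ℕ` because
`(x + 1/2) log (1 + 1/x) ≥ 1`, and log-convexity of `Γ` bounds it at `n + θ`, `θ ∈ [0, 1]`, from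
below by `Stirling.stirlingSeq n ≥ √π` times a factor tending to `1`; hence it is at least `√π`. -/
noncomputable def stirlingGamma (x : ℝ) : ℝ :=
  Gamma (x + 1) / (√(2 * x) * (x / exp 1) ^ x)

lemma two_div_two_mul_add_one_le_log_one_add_inv {x : ℝ} (hx : 0 < x) :
    2 / (2 * x + 1) ≤ log (1 + x⁻¹) := by
  simpa [div_eq_mul_inv] using
    le_hasSum (hasSum_log_one_add_inv hx) 0 fun _ _ ↦ by positivity

lemma log_sqrt_two_mul_mul_div_exp_rpow {x : ℝ} (hx : 0 < x) :
    log (√(2 * x) * (x / exp 1) ^ x) = (log 2 + log x) / 2 + x * (log x - 1) := by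
  rw [log_mul (by positivity) (by positivity), log_sqrt (by positivity), log_rpow (by positivity),
    log_div hx.ne' (exp_pos 1).ne', log_exp, log_mul two_ne_zero hx.ne']

lemma stirlingGamma_add_one_le {x : ℝ} (hx : 0 < x) :
    stirlingGamma (x + 1) ≤ stirlingGamma x := by
  have hx₁ : 0 < x + 1 := by linarith
  have hlog : log (1 + x⁻¹) = log (x + 1) - log x := by
    rw [← log_div hx₁.ne' hx.ne']
    congr 1
    field_simp
  have hkey : 1 ≤ (x + 1 / 2) * (log (x + 1) - log x) :=
    calc (1 : ℝ) = (x + 1 / 2) * (2 / (2 * x + 1)) := by field_simp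
      _ ≤ (x + 1 / 2) * (log (x + 1) - log x) := by
        rw [← hlog]
        gcongr
        exact two_div_two_mul_add_one_le_log_one_add_inv hx
  have hden : (x + 1) * (√(2 * x) * (x / exp 1) ^ x) ≤
      √(2 * (x + 1)) * ((x + 1) / exp 1) ^ (x + 1) := by
    rw [← log_le_log_iff (by positivity) (by positivity), log_mul hx₁.ne' (by positivity),
      log_sqrt_two_mul_mul_div_exp_rpow hx, log_sqrt_two_mul_mul_div_exp_rpow hx₁]
    linarith
  unfold stirlingGamma
  rw [Gamma_add_one hx₁.ne', div_le_div_iff₀ (by positivity) (by positivity)]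
  linarith [mul_le_mul_of_nonneg_left hden (Gamma_pos_of_pos hx₁).le]

lemma stirlingGamma_add_nat_le {x : ℝ} (hx : 0 < x) (n : ℕ) :
    stirlingGamma (x + n) ≤ stirlingGamma x := by
  induction n with
  | zero => simp
  | succ n ih =>
    rw [Nat.cast_succ, ← add_assoc]
    exact (stirlingGamma_add_one_le (by positivity)).trans ih

lemma factorial_mul_rpow_le_Gamma {θ : ℝ} (hθ₀ : 0 ≤ θ) (hθ₁ : θ ≤ 1) {n : ℕ} (hn : n ≠ 0) :
    n ! * (n + θ) ^ θ ≤ Gamma (n + θ + 1) := by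
  have hy : (0 : ℝ) < n + θ := by positivity
  have hΓ : 0 < Gamma (n + θ) := Gamma_pos_of_pos hy
  have hconv := convexOn_log_Gamma.2 (mem_Ioi.2 hy) (mem_Ioi.2 (by linarith : (0 : ℝ) < n + θ + 1))
    hθ₀ (by linarith : 0 ≤ 1 - θ) (by ring)
  have hmid : θ * ((n : ℝ) + θ) + (1 - θ) * (n + θ + 1) = n + 1 := by ring
  simp only [Function.comp_apply, smul_eq_mul] at hconv
  rw [hmid, Gamma_nat_eq_factorial, Gamma_add_one hy.ne', log_mul hy.ne' hΓ.ne'] at hconv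
  rw [← log_le_log_iff (by positivity) (by positivity), log_mul (by positivity) (by positivity),
    log_rpow hy, Gamma_add_one hy.ne', log_mul hy.ne' hΓ.ne']
  nlinarith

lemma stirlingSeq_mul_le_stirlingGamma {θ : ℝ} (hθ₀ : 0 ≤ θ) (hθ₁ : θ ≤ 1) {n : ℕ}
    (hn : n ≠ 0) :
    Stirling.stirlingSeq n * (√((1 + θ / n)⁻¹) * (exp θ / (1 + θ / n) ^ n)) ≤
      stirlingGamma (n + θ) := by
  set q : ℝ := 1 + θ / n with hq
  have hq₀ : 0 < q := by positivity
  have hy : (n : ℝ) + θ = n * q := by rw [hq]; field_simp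
  set D := √(2 * n) * √q * ((n / exp 1) ^ n * q ^ n) * (n + θ) ^ θ / exp θ with hD_def
  have hD : √(2 * (n + θ)) * ((n + θ) / exp 1) ^ ((n : ℝ) + θ) = D := by
    rw [hD_def, rpow_add (by positivity), rpow_natCast, div_rpow (by positivity) (exp_pos 1).le,
      exp_one_rpow, hy, ← mul_assoc 2, sqrt_mul (by positivity) q, mul_div_right_comm, mul_pow]
    field_simp
  unfold stirlingGamma Stirling.stirlingSeq
  rw [hD, sqrt_inv]
  calc (n ! : ℝ) / (√(2 * n) * (n / exp 1) ^ n) * ((√q)⁻¹ * (exp θ / q ^ n))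
      = n ! * (n + θ) ^ θ / D := by rw [hD_def]; field_simp
    _ ≤ Gamma (n + θ + 1) / D :=
        div_le_div_of_nonneg_right (factorial_mul_rpow_le_Gamma hθ₀ hθ₁ hn) (by positivity)

lemma tendsto_sqrt_inv_mul_exp_div_one_add_div_pow (θ : ℝ) :
    Tendsto (fun n : ℕ ↦ √((1 + θ / n)⁻¹) * (exp θ / (1 + θ / n) ^ n)) atTop (𝓝 1) := by
  have h₁ : Tendsto (fun n : ℕ ↦ 1 + θ / n) atTop (𝓝 1) := by
    simpa using (tendsto_const_div_atTop_nhds_zero_nat θ).const_add 1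
  have h₂ := (tendsto_const_nhds (x := exp θ)).div (tendsto_one_add_div_pow_exp θ) (exp_pos θ).ne'
  simpa [(exp_pos θ).ne'] using (h₁.inv₀ one_ne_zero).sqrt.mul h₂

lemma sqrt_pi_le_stirlingGamma {x : ℝ} (hx : 0 < x) : √π ≤ stirlingGamma x := by
  set m := ⌊x⌋₊
  set θ := x - m with hθ
  have hθ₀ : 0 ≤ θ := sub_nonneg.2 (Nat.floor_le hx.le)
  have hθ₁ : θ ≤ 1 := by linarith [Nat.lt_floor_add_one x]
  have hlim := ((tendsto_sqrt_inv_mul_exp_div_one_add_div_pow θ).comp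
    (tendsto_add_atTop_nat (m + 1))).const_mul √π
  rw [mul_one] at hlim
  refine le_of_tendsto_of_tendsto' hlim tendsto_const_nhds fun k ↦ ?_
  set N := k + (m + 1) with hN
  have hq : 0 ≤ 1 + θ / N := by positivity
  calc √π * (√((1 + θ / N)⁻¹) * (exp θ / (1 + θ / N) ^ N))
      ≤ Stirling.stirlingSeq N * (√((1 + θ / N)⁻¹) * (exp θ / (1 + θ / N) ^ N)) :=
        mul_le_mul_of_nonneg_right (Stirling.sqrt_pi_le_stirlingSeq (by omega)) (by positivity)
    _ ≤ stirlingGamma (N + θ) := stirlingSeq_mul_le_stirlingGamma hθ₀ hθ₁ (by omega)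
    _ = stirlingGamma (x + (k + 1 : ℕ)) := by rw [hθ, hN]; push_cast; ring_nf
    _ ≤ stirlingGamma x := stirlingGamma_add_nat_le hx _

theorem le_Gamma_add_one_stirling {x : ℝ} (hx : 0 ≤ x) :
    √(2 * π * x) * (x / exp 1) ^ x ≤ Gamma (x + 1) := by
  rcases hx.eq_or_lt with rfl | hx
  · simp
  have h := sqrt_pi_le_stirlingGamma hx
  rw [stirlingGamma, le_div_iff₀ (by positivity)] at h
  rwa [show 2 * π * x = π * (2 * x) by ring, sqrt_mul pi_nonneg, mul_assoc]

end Real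

namespace ProbabilityTheory

lemma gammaMeasure_Iic_le {a r t : ℝ} (ha : 0 < a) (hr : 0 < r) (ht : 0 ≤ t) :
    gammaMeasure a r (Iic t) ≤ ENNReal.ofReal ((r * t) ^ a / Gamma (a + 1)) := by
  have hint : IntegrableOn (fun u : ℝ ↦ r ^ a / Gamma a * u ^ (a - 1)) (Icc 0 t) := by
    rw [integrableOn_Icc_iff_integrableOn_Ioc]
    exact (intervalIntegral.intervalIntegrable_rpow' (by linarith : -1 < a - 1)).1.const_mul _
  rw [gammaMeasure, withDensity_apply _ measurableSet_Iic,
    lintegral_Iic_eq_lintegral_Iio_add_Icc _ ht, lintegral_gammaPDF_of_nonpos le_rfl, zero_add]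
  calc ∫⁻ u in Icc 0 t, gammaPDF a r u
      ≤ ∫⁻ u in Icc 0 t, ENNReal.ofReal (r ^ a / Gamma a * u ^ (a - 1)) := by
        refine setLIntegral_mono' measurableSet_Icc fun u hu ↦ ?_
        have := rpow_nonneg hu.1 (a - 1)
        rw [gammaPDF_of_nonneg hu.1]
        exact ENNReal.ofReal_le_ofReal (mul_le_of_le_one_right (by positivity)
          (exp_le_one_iff.2 (by nlinarith [hu.1])))
    _ = ENNReal.ofReal (∫ u in Icc 0 t, r ^ a / Gamma a * u ^ (a - 1)) :=
        (ofReal_integral_eq_lintegral_ofReal hint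
          (ae_restrict_of_forall_mem measurableSet_Icc fun u hu ↦ by
            have := rpow_nonneg hu.1 (a - 1); positivity)).symm
    _ = ENNReal.ofReal ((r * t) ^ a / Gamma (a + 1)) := by
        rw [integral_Icc_eq_integral_Ioc, ← intervalIntegral.integral_of_le ht,
          intervalIntegral.integral_const_mul, integral_rpow (Or.inl (by linarith)),
          sub_add_cancel, zero_rpow ha.ne', sub_zero, Gamma_add_one ha.ne', mul_rpow hr.le ht]
        congr 1
        field_simp

lemma gammaMeasure_Ioi_le {a r r' : ℝ} (ha : 0 < a) (hr' : 0 < r') (hr'r : r' ≤ r) (s : ℝ) :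
    gammaMeasure a r (Ioi s) ≤ ENNReal.ofReal ((r / r') ^ a * exp (-((r - r') * s))) := by
  have hr : 0 < r := hr'.trans_le hr'r
  set C := (r / r') ^ a * exp (-((r - r') * s))
  have hC : 0 ≤ C := by positivity
  have hpdf : ∀ u ∈ Ioi s, gammaPDF a r u ≤ ENNReal.ofReal C * gammaPDF a r' u := by
    intro u hu
    rcases lt_or_ge u 0 with hu₀ | hu₀
    · simp [gammaPDF_of_neg hu₀]
    rw [gammaPDF_of_nonneg hu₀, gammaPDF_of_nonneg hu₀, ← ENNReal.ofReal_mul hC]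
    refine ENNReal.ofReal_le_ofReal ?_
    have hexp : exp (-(r * u)) ≤ exp (-((r - r') * s)) * exp (-(r' * u)) := by
      rw [← exp_add]
      exact exp_le_exp.2 (by nlinarith [mul_le_mul_of_nonneg_left hu.le (sub_nonneg.2 hr'r)])
    have hra : r ^ a = (r / r') ^ a * r' ^ a := by
      rw [div_rpow hr.le hr'.le, div_mul_cancel₀ _ (rpow_pos_of_pos hr' a).ne']
    calc r ^ a / Gamma a * u ^ (a - 1) * exp (-(r * u))
        ≤ r ^ a / Gamma a * u ^ (a - 1) * (exp (-((r - r') * s)) * exp (-(r' * u))) := by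
          gcongr
      _ = C * (r' ^ a / Gamma a * u ^ (a - 1) * exp (-(r' * u))) := by rw [hra]; ring
  have := isProbabilityMeasure_gammaMeasure ha hr'
  calc gammaMeasure a r (Ioi s)
      = ∫⁻ u in Ioi s, gammaPDF a r u := withDensity_apply _ measurableSet_Ioi
    _ ≤ ∫⁻ u in Ioi s, ENNReal.ofReal C * gammaPDF a r' u :=
        setLIntegral_mono' measurableSet_Ioi hpdf
    _ = ENNReal.ofReal C * gammaMeasure a r' (Ioi s) := by
        rw [lintegral_const_mul' _ _ ENNReal.ofReal_ne_top, gammaMeasure,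
          withDensity_apply _ measurableSet_Ioi]
    _ ≤ ENNReal.ofReal C := mul_le_of_le_one_right' prob_le_one

lemma chiSq_Ioi_le {d : ℝ} (hd : 0 < d) (s : ℝ) :
    gammaMeasure (d / 2) (1 / 2) (Ioi s) ≤ ENNReal.ofReal (exp (-s / 4 + d / 2)) := by
  refine (gammaMeasure_Ioi_le (by positivity) (by norm_num : (0 : ℝ) < 1 / 4) (by norm_num)
    s).trans (ENNReal.ofReal_le_ofReal ?_)
  have h2e : (2 : ℝ) ^ (d / 2) ≤ exp (d / 2) := by
    rw [← exp_one_rpow]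
    exact rpow_le_rpow (by norm_num) (by linarith [add_one_le_exp (1 : ℝ)]) (by positivity)
  rw [show (1 / 2 : ℝ) / (1 / 4) = 2 by norm_num, show -((1 / 2 - 1 / 4) * s) = -s / 4 by ring,
    exp_add, mul_comm (exp _)]
  gcongr

lemma chiSq_Iic_le {d : ℝ} (hd : 0 < d) :
    gammaMeasure (d / 2) (1 / 2) (Iic (d / exp 2)) ≤
      ENNReal.ofReal (exp (-d / 2) / √(π * d)) := by
  refine (gammaMeasure_Iic_le (by positivity) (by norm_num) (by positivity)).trans
    (ENNReal.ofReal_le_ofReal ?_)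
  set x := d / 2 with hx
  have hx₀ : 0 < x := by positivity
  have hpow : (1 / 2 * (d / exp 2)) ^ x = (x / exp 1) ^ x * exp (-x) := by
    have he : exp 2 = exp 1 * exp 1 := by rw [← exp_add]; norm_num
    rw [show 1 / 2 * (d / exp 2) = x / exp 1 * exp (-1) by rw [hx, he, exp_neg]; field_simp,
      mul_rpow (by positivity) (exp_pos _).le, ← exp_mul, neg_one_mul]
  rw [hpow, show π * d = 2 * π * x by rw [hx]; ring, show -d / 2 = -x by rw [hx]; ring]
  calc (x / exp 1) ^ x * exp (-x) / Gamma (x + 1)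
      ≤ (x / exp 1) ^ x * exp (-x) / (√(2 * π * x) * (x / exp 1) ^ x) :=
        div_le_div_of_nonneg_left (by positivity) (by positivity)
          (le_Gamma_add_one_stirling hx₀.le)
    _ = exp (-x) / √(2 * π * x) := by field_simp

end ProbabilityTheory

theorem chiSq_ratio_tail_bound_general
    {Ω : Type*} [MeasurableSpace Ω] (P : Measure Ω)
    (d₁ d₂ : ℕ) (hd₁ : 1 ≤ d₁) (hd₂ : 1 ≤ d₂)
    (a : ℝ) (ha : 1 < a)
    (V₁ V₂ : Ω → ℝ) (hV₁meas : Measurable V₁) (hV₂meas : Measurable V₂)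
    (hV₁ : Measure.map V₁ P = gammaMeasure ((d₁ : ℝ) / 2) (1 / 2))
    (hV₂ : Measure.map V₂ P = gammaMeasure ((d₂ : ℝ) / 2) (1 / 2)) :
    P {ω | (a - 1) * V₂ ω < V₁ ω} ≤
      ENNReal.ofReal (Real.exp (-((d₂ : ℝ) / Real.exp 2) * (a - 1) / 4 + d₁ / 2) +
        Real.exp (-(d₂ : ℝ) / 2) / Real.sqrt (π * d₂)) := by
  set t : ℝ := d₂ / exp 2
  have hsub : {ω | (a - 1) * V₂ ω < V₁ ω} ⊆ V₁ ⁻¹' Ioi ((a - 1) * t) ∪ V₂ ⁻¹' Iic t := by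
    intro ω hω
    rcases le_or_gt (V₂ ω) t with h | h
    · exact Or.inr h
    · exact Or.inl ((mul_lt_mul_of_pos_left h (by linarith)).trans hω)
  have h₁ : P (V₁ ⁻¹' Ioi ((a - 1) * t)) ≤
      ENNReal.ofReal (exp (-((a - 1) * t) / 4 + d₁ / 2)) := by
    rw [← Measure.map_apply hV₁meas measurableSet_Ioi, hV₁]
    exact chiSq_Ioi_le (Nat.cast_pos.2 hd₁) _
  have h₂ : P (V₂ ⁻¹' Iic t) ≤ ENNReal.ofReal (exp (-(d₂ : ℝ) / 2) / √(π * d₂)) := by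
    rw [← Measure.map_apply hV₂meas measurableSet_Iic, hV₂]
    exact chiSq_Iic_le (Nat.cast_pos.2 hd₂)
  calc P {ω | (a - 1) * V₂ ω < V₁ ω}
      ≤ P (V₁ ⁻¹' Ioi ((a - 1) * t)) + P (V₂ ⁻¹' Iic t) :=
        (measure_mono hsub).trans (measure_union_le _ _)
    _ ≤ _ := by
        rw [ENNReal.ofReal_add (by positivity) (by positivity),
          show -t * (a - 1) / 4 = -((a - 1) * t) / 4 by ring]
        exact add_le_add h₁ h₂

/-- for independent chi-square random variables `V₁ ~ χ²_{d₁}` and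
`V₂ ~ χ²_{d₂}`, and `a > 1`,
`P(V₁ > (a-1)V₂) ≤ e^{-(d₂/e²)(a-1)/4 + d₁/2} + e^{-d₂/2}/√(π d₂)`. -/
theorem chiSq_ratio_tail_bound
    {Ω : Type*} [MeasurableSpace Ω] (P : Measure Ω) [IsProbabilityMeasure P]
    (d₁ d₂ : ℕ) (hd₁ : 1 ≤ d₁) (hd₂ : 1 ≤ d₂)
    (a : ℝ) (ha : 1 < a)
    (V₁ V₂ : Ω → ℝ) (hV₁meas : Measurable V₁) (hV₂meas : Measurable V₂)
    (hV₁ : Measure.map V₁ P = gammaMeasure ((d₁ : ℝ) / 2) (1 / 2))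
    (hV₂ : Measure.map V₂ P = gammaMeasure ((d₂ : ℝ) / 2) (1 / 2))
    (hindep : IndepFun V₁ V₂ P) :
    P {ω | (a - 1) * V₂ ω < V₁ ω} ≤
      ENNReal.ofReal (Real.exp (-((d₂ : ℝ) / Real.exp 2) * (a - 1) / 4 + d₁ / 2) +
        Real.exp (-(d₂ : ℝ) / 2) / Real.sqrt (π * d₂)) :=
  chiSq_ratio_tail_bound_general P d₁ d₂ hd₁ hd₂ a ha V₁ V₂ hV₁meas hV₂meas hV₁ hV₂
end

section
/- Let k ≥ 1 be an integer and let V be a chi-square random variable with k degrees of freedom. Then P( V < k/e² ) ≤ e^{−k/2}/√(π·k). -/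
/-!
Below `t`, the gamma density of shape `a` and rate `r` is at most `r ^ a x ^ (a - 1) / Γ(a)`,
so `P(V < t) ≤ (r t) ^ a / Γ(a + 1)`. For `a = k / 2`, `r = 1 / 2` and `t = k / e²` this equals
`e ^ (-a) (a / e) ^ a / Γ(a + 1)`, and the claim reduces to Stirling's lower bound
`√(2πa) (a / e) ^ a ≤ Γ(a + 1)`. For integral `a` this is `Stirling.le_factorial_stirling`.
For `a = m - 1/2` the duplication formula gives `Γ(m + 1/2) = √(2π) (s(2m) / s(m)) (m / e) ^ m`
in terms of the Stirling sequence `s`, and the bound becomes `√e (1 - 1/(2m)) ^ m ≤ s(2m) / s(m)`: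
the left side is at most `exp (-1/(8m))` since `log (1 - x) ≤ -x - x² / 2`, the right side at
least `exp (-1/(24m))` by Robbins' estimate `log s(n) - log s(n + 1) ≤ 1 / (12 n (n + 1))`.
-/

open MeasureTheory ProbabilityTheory Real Set Stirling Nat

lemma gammaMeasure_Iio_le {a r t : ℝ} (ha : 0 < a) (hr : 0 ≤ r) (ht : 0 ≤ t) :
    gammaMeasure a r (Iio t) ≤ ENNReal.ofReal ((r * t) ^ a / Gamma (a + 1)) := by
  set C := r ^ a / Gamma a
  have hpdf : ∀ x ∈ Ioo 0 t, gammaPDF a r x ≤ ENNReal.ofReal (C * x ^ (a - 1)) := by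
    intro x hx
    rw [gammaPDF_of_nonneg hx.1.le]
    refine ENNReal.ofReal_le_ofReal (mul_le_of_le_one_right (by have := hx.1; positivity) ?_)
    exact exp_le_one_iff.mpr (by nlinarith [hx.1])
  have hint : ∫ x in Ioo 0 t, C * x ^ (a - 1) = C * (t ^ a / a) := by
    rw [integral_const_mul, ← integral_Ioc_eq_integral_Ioo,
      ← intervalIntegral.integral_of_le ht, integral_rpow (Or.inl (by linarith)), sub_add_cancel,
      zero_rpow ha.ne', sub_zero]
  calc gammaMeasure a r (Iio t)
      = (∫⁻ x in Iio 0, gammaPDF a r x) + ∫⁻ x in Ico 0 t, gammaPDF a r x := by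
        rw [gammaMeasure, withDensity_apply _ measurableSet_Iio, ← Iio_union_Ico_eq_Iio ht,
          lintegral_union measurableSet_Ico
            ((Iio_disjoint_Ici le_rfl).mono_right Ico_subset_Ici_self)]
    _ = ∫⁻ x in Ioo 0 t, gammaPDF a r x := by
        rw [lintegral_gammaPDF_of_nonpos (a := a) (r := r) le_rfl, zero_add,
          setLIntegral_congr Ioo_ae_eq_Ico.symm]
    _ ≤ ∫⁻ x in Ioo 0 t, ENNReal.ofReal (C * x ^ (a - 1)) :=
        setLIntegral_mono (by fun_prop) hpdf
    _ = ENNReal.ofReal ((r * t) ^ a / Gamma (a + 1)) := by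
        rw [← ofReal_integral_eq_lintegral_ofReal, hint]
        · congr 1
          rw [Gamma_add_one ha.ne', mul_rpow hr ht]
          simp only [C]
          field_simp
        · exact ((intervalIntegral.intervalIntegrable_rpow' (by linarith)).1.mono_set
            Ioo_subset_Ioc_self).const_mul C
        · filter_upwards [ae_restrict_mem measurableSet_Ioo] with x hx
          have := hx.1
          positivity

lemma stirlingSeq_pos {n : ℕ} (hn : n ≠ 0) : 0 < stirlingSeq n :=
  (sqrt_pos.mpr pi_pos).trans_le (sqrt_pi_le_stirlingSeq hn)

lemma log_stirlingSeq_sub_log_stirlingSeq_add_le {m : ℕ} (hm : m ≠ 0) (n : ℕ) :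
    log (stirlingSeq m) - log (stirlingSeq (m + n)) ≤ (1 / m - 1 / (m + n)) / 12 := by
  induction n with
  | zero => simp
  | succ n ih =>
    have hstep := log_stirlingSeq_sdiff_le (m + n)
    have hmn : (0 : ℝ) < m + n := by positivity
    have htel : (1 : ℝ) / (12 * (m + n : ℕ) * ((m + n : ℕ) + 1)) =
        (1 / (m + n) - 1 / (m + n + 1)) / 12 := by
      push_cast; field_simp; ring
    rw [htel] at hstep
    simp only [Nat.cast_add, Nat.cast_one, ← add_assoc] at hstep ⊢
    linarith

lemma exp_neg_le_stirlingSeq_two_mul_div {m : ℕ} (hm : m ≠ 0) :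
    exp (-(1 / (24 * m))) ≤ stirlingSeq (2 * m) / stirlingSeq m := by
  have hs : 0 < stirlingSeq m := stirlingSeq_pos hm
  have hs2 : 0 < stirlingSeq (2 * m) := stirlingSeq_pos (by omega)
  have htel := log_stirlingSeq_sub_log_stirlingSeq_add_le hm m
  have hm' : (0 : ℝ) < m := by positivity
  have h24 : (1 / m - 1 / (m + m : ℝ)) / 12 = 1 / (24 * m) := by field_simp; ring
  rw [← two_mul m, h24] at htel
  rw [le_div_iff₀ hs, ← exp_log hs, ← exp_log hs2, ← exp_add]
  gcongr
  linarith

lemma one_sub_le_exp_neg_add_sq_div_two {x : ℝ} (hx0 : 0 ≤ x) (hx1 : x < 1) :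
    1 - x ≤ exp (-(x + x ^ 2 / 2)) := by
  have hsum := hasSum_pow_div_log_of_abs_lt_one (abs_lt.mpr ⟨by linarith, hx1⟩)
  have hpartial : ∑ i ∈ Finset.range 2, x ^ (i + 1) / (i + 1) ≤ -log (1 - x) :=
    sum_le_hasSum _ (fun i _ ↦ by positivity) hsum
  norm_num [Finset.sum_range_succ] at hpartial
  rw [← exp_log (sub_pos.mpr hx1)]
  gcongr
  linarith

lemma sqrt_exp_one_mul_one_sub_pow_le {m : ℕ} (hm : m ≠ 0) :
    √(exp 1) * (1 - 1 / (2 * m)) ^ m ≤ exp (-(1 / (8 * m))) := by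
  have hm' : (1 : ℝ) ≤ m := Nat.one_le_cast.mpr (Nat.one_le_iff_ne_zero.mpr hm)
  have hx1 : 1 / (2 * m) < (1 : ℝ) := by rw [div_lt_one (by positivity)]; linarith
  have hpow := pow_le_pow_left₀ (sub_nonneg.mpr hx1.le)
    (one_sub_le_exp_neg_add_sq_div_two (by positivity) hx1) m
  rw [← exp_nat_mul] at hpow
  calc √(exp 1) * (1 - 1 / (2 * m)) ^ m
      ≤ exp (1 / 2) * exp (m * -(1 / (2 * m) + (1 / (2 * m)) ^ 2 / 2)) := by
        rw [← exp_half]; gcongr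
    _ = exp (-(1 / (8 * m))) := by
        rw [← exp_add]; congr 1; field_simp; ring

lemma factorial_eq_stirlingSeq_mul {n : ℕ} (hn : n ≠ 0) :
    (n ! : ℝ) = stirlingSeq n * √(2 * n) * (n / exp 1) ^ n := by
  have : 0 < √(2 * n) * (n / exp 1) ^ n := by positivity
  rw [mul_assoc, stirlingSeq, div_mul_cancel₀ _ this.ne']

lemma Gamma_nat_add_half_eq_stirlingSeq {m : ℕ} (hm : m ≠ 0) :
    Gamma (m + 1 / 2) = √(2 * π) * (stirlingSeq (2 * m) / stirlingSeq m) * (m / exp 1) ^ m := by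
  have hdup := Gamma_mul_Gamma_add_half (m + 1 / 2)
  have h1 : (m : ℝ) + 1 / 2 + 1 / 2 = m + 1 := by ring
  have h2 : 2 * ((m : ℝ) + 1 / 2) = (2 * m : ℕ) + 1 := by push_cast; ring
  have h3 : (2 : ℝ) ^ (1 - (((2 * m : ℕ) : ℝ) + 1)) = (4 ^ m)⁻¹ := by
    rw [show 1 - (((2 * m : ℕ) : ℝ) + 1) = -(2 * m) by push_cast; ring, rpow_neg zero_le_two,
      rpow_mul zero_le_two]
    norm_num
  have hsqrt : √(2 * (2 * m : ℕ)) = √2 * √(2 * m) := by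
    push_cast; rw [← sqrt_mul zero_le_two]
  have hpow : ((2 * m : ℕ) / exp 1 : ℝ) ^ (2 * m) = 4 ^ m * ((m / exp 1) ^ m) ^ 2 := by
    rw [pow_mul, show ((2 * m : ℕ) / exp 1 : ℝ) ^ 2 = 4 * (m / exp 1) ^ 2 by push_cast; ring,
      mul_pow]
    ring
  rw [h1, h2, h3, Gamma_nat_eq_factorial, Gamma_nat_eq_factorial, factorial_eq_stirlingSeq_mul hm,
    factorial_eq_stirlingSeq_mul (by omega), hsqrt, hpow] at hdup
  have hs : 0 < stirlingSeq m := stirlingSeq_pos hm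
  have : 0 < √(2 * m) := by positivity
  have : 0 < (m / exp 1 : ℝ) ^ m := by positivity
  rw [sqrt_mul zero_le_two π]
  field_simp at hdup ⊢
  linear_combination hdup

lemma le_Gamma_nat_add_half_stirling {m : ℕ} (hm : m ≠ 0) :
    √(2 * π * (m - 1 / 2)) * ((m - 1 / 2) / exp 1) ^ ((m : ℝ) - 1 / 2) ≤ Gamma (m + 1 / 2) := by
  have hm1 : (1 : ℝ) ≤ m := Nat.one_le_cast.mpr (Nat.one_le_iff_ne_zero.mpr hm)
  set a : ℝ := m - 1 / 2
  have ha : 0 < a := by simp only [a]; linarith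
  have hlhs : √(2 * π * a) * (a / exp 1) ^ ((m : ℝ) - 1 / 2) =
      √(2 * π) * (√(exp 1) * (1 - 1 / (2 * m)) ^ m) * (m / exp 1) ^ m := by
    rw [rpow_sub (by positivity), rpow_natCast, ← sqrt_eq_rpow, sqrt_div ha.le,
      sqrt_mul (x := 2 * π) (by positivity),
      show 1 - 1 / (2 * m) = a / m by simp only [a]; field_simp]
    field_simp
    rw [← mul_pow, div_mul_div_cancel₀ (by positivity)]
  rw [hlhs, Gamma_nat_add_half_eq_stirlingSeq hm]
  gcongr
  calc √(exp 1) * (1 - 1 / (2 * m)) ^ m ≤ exp (-(1 / (8 * m))) :=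
        sqrt_exp_one_mul_one_sub_pow_le hm
    _ ≤ exp (-(1 / (24 * m))) := by gcongr; norm_num
    _ ≤ stirlingSeq (2 * m) / stirlingSeq m := exp_neg_le_stirlingSeq_two_mul_div hm

lemma le_Gamma_half_nat_add_one_stirling (k : ℕ) :
    √(2 * π * (k / 2)) * ((k / 2) / exp 1) ^ ((k : ℝ) / 2) ≤ Gamma (k / 2 + 1) := by
  obtain ⟨n, rfl | rfl⟩ := Nat.even_or_odd' k
  · rw [show ((2 * n : ℕ) : ℝ) / 2 = n by push_cast; ring, rpow_natCast, Gamma_nat_eq_factorial]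
    exact le_factorial_stirling n
  · rw [show ((2 * n + 1 : ℕ) : ℝ) / 2 = ((n + 1 : ℕ) : ℝ) - 1 / 2 by push_cast; ring,
      show ((n + 1 : ℕ) : ℝ) - 1 / 2 + 1 = (n + 1 : ℕ) + 1 / 2 by ring]
    exact le_Gamma_nat_add_half_stirling n.succ_ne_zero

theorem chiSq_lower_tail_bound_general
    {Ω : Type*} [MeasurableSpace Ω] (P : Measure Ω)
    (k : ℕ) (hk : 1 ≤ k)
    (V : Ω → ℝ) (hVmeas : Measurable V)
    (hV : Measure.map V P = gammaMeasure ((k : ℝ) / 2) (1 / 2)) :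
    P {ω | V ω < (k : ℝ) / Real.exp 2} ≤
      ENNReal.ofReal (Real.exp (-(k : ℝ) / 2) / Real.sqrt (π * k)) := by
  have hk0 : (0 : ℝ) < k := by exact_mod_cast hk
  have hscale : 1 / 2 * (k / exp 2) = exp (-1) * (k / 2 / exp 1) := by
    rw [show (2 : ℝ) = 1 + 1 by norm_num, exp_add, exp_neg]; field_simp
  have hstirling := le_Gamma_half_nat_add_one_stirling k
  rw [show √(2 * π * (k / 2)) = √(π * k) by ring_nf] at hstirling
  calc P {ω | V ω < k / exp 2} = gammaMeasure (k / 2) (1 / 2) (Iio (k / exp 2)) := by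
        rw [← hV, Measure.map_apply hVmeas measurableSet_Iio]; rfl
    _ ≤ ENNReal.ofReal ((1 / 2 * (k / exp 2)) ^ ((k : ℝ) / 2) / Gamma (k / 2 + 1)) :=
        gammaMeasure_Iio_le (by positivity) (by norm_num) (by positivity)
    _ = ENNReal.ofReal (exp (-k / 2) * ((k / 2 / exp 1) ^ ((k : ℝ) / 2) / Gamma (k / 2 + 1))) := by
        rw [hscale, mul_rpow (exp_pos _).le (by positivity), ← exp_mul, mul_div_assoc, neg_one_mul,
          neg_div]
    _ ≤ ENNReal.ofReal (exp (-k / 2) * (1 / √(π * k))) := by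
        refine ENNReal.ofReal_le_ofReal (mul_le_mul_of_nonneg_left ?_ (exp_pos _).le)
        rw [div_le_div_iff₀ (Gamma_pos_of_pos (by positivity)) (by positivity), one_mul, mul_comm]
        exact hstirling
    _ = ENNReal.ofReal (exp (-k / 2) / √(π * k)) := by rw [mul_one_div]

/-- lower tail bound for the chi-square distribution: if `V ~ χ²_k`
then `P(V < k/e²) ≤ e^{-k/2}/√(πk)`. -/
theorem chiSq_lower_tail_bound
    {Ω : Type*} [MeasurableSpace Ω] (P : Measure Ω) [IsProbabilityMeasure P]
    (k : ℕ) (hk : 1 ≤ k)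
    (V : Ω → ℝ) (hVmeas : Measurable V)
    (hV : Measure.map V P = gammaMeasure ((k : ℝ) / 2) (1 / 2)) :
    P {ω | V ω < (k : ℝ) / Real.exp 2} ≤
      ENNReal.ofReal (Real.exp (-(k : ℝ) / 2) / Real.sqrt (π * k)) :=
  chiSq_lower_tail_bound_general P k hk V hVmeas hV
end

section
/- Let A be an n×m real matrix with AᵀA invertible, set H := A(AᵀA)⁻¹Aᵀ, and let y ∈ ℝⁿ, β ∈ ℝ^m, σ > 0. Let B be the n×(m+1) real matrix whose first m columns are the columns of A and whose last column is (y − Aβ)/σ. Then √(det(BᵀB)) = σ⁻¹·√(det(AᵀA))·√(yᵀ(I_n − H)y). (This is the generalized fiducial Jacobian J(y,(β,σ)) = σ⁻¹·|det(X_MᵀX_M)|^{1/2}·RSS_M^{1/2} for the linear model data generating equation.) -/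
/-!
Writing `B = [A ∣ r]` with `r = (y - Aβ)/σ`, the Gram matrix `BᵀB` has the block form
`[[AᵀA, Aᵀr], [rᵀA, rᵀr]]`, whose Schur complement over `AᵀA` is `rᵀ(I - H)r`. Since `I - H` is
symmetric and kills the columns of `A`, `rᵀ(I - H)r = σ⁻² yᵀ(I - H)y`, and the square root of
`σ⁻²` is `σ⁻¹`.
-/

open Matrix

namespace Matrix

variable {R : Type*} [CommRing R] {n m : Type*} [Fintype n] [Fintype m] [DecidableEq m]

theorem det_transpose_mul_self_submatrix_id {m' : Type*} [Fintype m'] [DecidableEq m']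
    (M : Matrix n m R) (e : m' ≃ m) :
    ((M.submatrix id e)ᵀ * M.submatrix id e).det = (Mᵀ * M).det := by
  rw [transpose_submatrix, ← Equiv.coe_refl, submatrix_mul_equiv, det_submatrix_equiv_self]

noncomputable def hatMatrix (A : Matrix n m R) : Matrix n n R := A * (Aᵀ * A)⁻¹ * Aᵀ

theorem transpose_hatMatrix (A : Matrix n m R) : (hatMatrix A)ᵀ = hatMatrix A := by
  rw [hatMatrix, transpose_mul, transpose_mul, transpose_transpose, transpose_nonsing_inv,
    transpose_mul, transpose_transpose, Matrix.mul_assoc]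

variable [DecidableEq n]

theorem one_sub_hatMatrix_mul (A : Matrix n m R) (hA : IsUnit (Aᵀ * A).det) :
    (1 - hatMatrix A) * A = 0 := by
  rw [hatMatrix, Matrix.sub_mul, Matrix.one_mul, Matrix.mul_assoc, Matrix.mul_assoc,
    nonsing_inv_mul _ hA, Matrix.mul_one, sub_self]

theorem det_gram_fromCols_replicateCol (A : Matrix n m R) (hA : IsUnit (Aᵀ * A).det)
    (r : n → R) :
    ((fromCols A (replicateCol (Fin 1) r))ᵀ * fromCols A (replicateCol (Fin 1) r)).det =
      (Aᵀ * A).det * (r ⬝ᵥ (1 - hatMatrix A) *ᵥ r) := by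
  let := (Aᵀ * A).invertibleOfIsUnitDet hA
  rw [transpose_fromCols, fromRows_mul_fromCols, det_fromBlocks₁₁, invOf_eq_nonsing_inv,
    det_fin_one, sub_apply, transpose_replicateCol, replicateRow_mul_replicateCol_apply,
    ← replicateCol_mulVec, ← replicateRow_vecMul, ← replicateRow_vecMul,
    replicateRow_mul_replicateCol_apply, dotProduct_mulVec, dotProduct_mulVec, vecMul_vecMul,
    vecMul_vecMul, vecMul_sub, vecMul_one, sub_dotProduct, hatMatrix, Matrix.mul_assoc]

theorem dotProduct_one_sub_hatMatrix_mulVec_sub_mulVec (A : Matrix n m R)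
    (hA : IsUnit (Aᵀ * A).det) (y : n → R) (β : m → R) :
    (y - A *ᵥ β) ⬝ᵥ (1 - hatMatrix A) *ᵥ (y - A *ᵥ β) = y ⬝ᵥ (1 - hatMatrix A) *ᵥ y := by
  have hAβ : (1 - hatMatrix A) *ᵥ (A *ᵥ β) = 0 := by
    rw [mulVec_mulVec, one_sub_hatMatrix_mul A hA, zero_mulVec]
  have hAβ' : (A *ᵥ β) ⬝ᵥ (1 - hatMatrix A) *ᵥ y = 0 := by
    have hsymm : (1 - hatMatrix A)ᵀ = 1 - hatMatrix A := by
      rw [transpose_sub, transpose_one, transpose_hatMatrix]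
    rw [dotProduct_mulVec, ← hsymm, vecMul_transpose, hAβ, zero_dotProduct]
  rw [mulVec_sub, hAβ, sub_zero, sub_dotProduct, hAβ', sub_zero]

end Matrix

/-- the generalized fiducial Jacobian for the linear model:
if `B = [A ∣ (y - Aβ)/σ]` then `√det(BᵀB) = σ⁻¹ √det(AᵀA) √(yᵀ(I-H)y)`. -/
theorem fiducial_jacobian
    (n m : ℕ) (A : Matrix (Fin n) (Fin m) ℝ) (hA : IsUnit (Aᵀ * A).det)
    (H : Matrix (Fin n) (Fin n) ℝ) (hH : H = A * (Aᵀ * A)⁻¹ * Aᵀ)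
    (y : Fin n → ℝ) (β : Fin m → ℝ) (σ : ℝ) (hσ : 0 < σ)
    (B : Matrix (Fin n) (Fin (m + 1)) ℝ)
    (hB : ∀ i j, B i j =
      Fin.lastCases (motive := fun _ => ℝ)
        ((y i - (A *ᵥ β) i) / σ) (fun j' => A i j') j) :
    Real.sqrt (Bᵀ * B).det =
      σ⁻¹ * Real.sqrt (Aᵀ * A).det * Real.sqrt (y ⬝ᵥ (1 - H) *ᵥ y) := by
  have hB' : B = (fromCols A (replicateCol (Fin 1) (σ⁻¹ • (y - A *ᵥ β)))).submatrix id
      finSumFinEquiv.symm := by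
    ext i j
    rw [hB]
    induction j using Fin.lastCases with
    | last => simp [div_eq_inv_mul]
    | cast j => simp
  have hdet : (Bᵀ * B).det = (Aᵀ * A).det * (σ⁻¹ ^ 2 * (y ⬝ᵥ (1 - H) *ᵥ y)) := by
    rw [hB', det_transpose_mul_self_submatrix_id, det_gram_fromCols_replicateCol A hA,
      mulVec_smul, dotProduct_smul, smul_dotProduct,
      dotProduct_one_sub_hatMatrix_mulVec_sub_mulVec A hA, hH, hatMatrix, smul_eq_mul,
      smul_eq_mul]
    ring
  have hgram : 0 ≤ (Aᵀ * A).det := by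
    simpa using (posSemidef_conjTranspose_mul_self A).det_nonneg
  rw [hdet, Real.sqrt_mul hgram, Real.sqrt_mul (by positivity), Real.sqrt_sq (by positivity)]
  ring
end

section
/- Let A be an n×m real matrix with m < n and AᵀA invertible (positive definite), set H := A(AᵀA)⁻¹Aᵀ, and let y ∈ ℝⁿ with RSS := yᵀ(I_n − H)y > 0. Then ∫_{ℝ^m} ∫_0^∞ σ^{−(n+1)}·exp( −‖y − Aβ‖₂²/(2σ²) )·√(det(AᵀA))·√(RSS) dσ dβ = 2^{(n−2)/2}·π^{m/2}·Γ((n−m)/2)·RSS^{−(n−m−1)/2}, where Γ is the Gamma function. (This computes the normalizing constant of the generalized fiducial density of (β,σ) in the linear model, without the admissibility factor.) -/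
/-!
Completing the square, `‖y - Aβ‖² = RSS + (β - β̂)ᵀ AᵀA (β - β̂)` with `β̂ = (AᵀA)⁻¹Aᵀy`,
because the residual `y - Aβ̂` is orthogonal to the range of `A`. For fixed `σ` the `β`-integral
is therefore Gaussian and equals `(√(2π) σ)^m e^{-RSS/(2σ²)} / √det(AᵀA)`, which cancels the
factor `√det(AᵀA)`.
What remains is `∫₀^∞ σ^{-(n-m+1)} e^{-RSS/(2σ²)} dσ`, a Gamma integral after `σ = u⁻¹`.
The integrand is nonnegative, so Tonelli justifies integrating in `β` first.
-/

open MeasureTheory Matrix Real Set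

section LeastSquares

variable {ι κ R : Type*} [Fintype ι] [Fintype κ] [CommRing R]

theorem mulVec_dotProduct_mulVec_self (A : Matrix ι κ R) (u : κ → R) :
    (A *ᵥ u) ⬝ᵥ (A *ᵥ u) = u ⬝ᵥ (Aᵀ * A) *ᵥ u := by
  rw [← mulVec_mulVec, dotProduct_transpose_mulVec]

theorem sub_mulVec_dotProduct_self_of_transpose_mulVec_eq_zero (A : Matrix ι κ R) {r : ι → R}
    (hr : Aᵀ *ᵥ r = 0) (u : κ → R) :
    (r - A *ᵥ u) ⬝ᵥ (r - A *ᵥ u) = r ⬝ᵥ r + u ⬝ᵥ (Aᵀ * A) *ᵥ u := by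
  have hcross : r ⬝ᵥ A *ᵥ u = 0 := by
    rw [← dotProduct_transpose_mulVec, hr, dotProduct_zero]
  rw [sub_dotProduct, dotProduct_sub, dotProduct_sub, dotProduct_comm (A *ᵥ u) r, hcross,
    mulVec_dotProduct_mulVec_self]
  ring

variable [DecidableEq ι] [DecidableEq κ]

theorem dotProduct_self_sub_mulVec_eq (A : Matrix ι κ R) (hA : IsUnit (Aᵀ * A).det)
    (y : ι → R) (β : κ → R) :
    (y - A *ᵥ β) ⬝ᵥ (y - A *ᵥ β) =
      y ⬝ᵥ (1 - A * (Aᵀ * A)⁻¹ * Aᵀ) *ᵥ y +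
        (β - (Aᵀ * A)⁻¹ *ᵥ Aᵀ *ᵥ y) ⬝ᵥ (Aᵀ * A) *ᵥ (β - (Aᵀ * A)⁻¹ *ᵥ Aᵀ *ᵥ y) := by
  set βhat := (Aᵀ * A)⁻¹ *ᵥ Aᵀ *ᵥ y
  have hproj : (1 - A * (Aᵀ * A)⁻¹ * Aᵀ) *ᵥ y = y - A *ᵥ βhat := by
    rw [sub_mulVec, one_mulVec, ← mulVec_mulVec, ← mulVec_mulVec]
  have hr : Aᵀ *ᵥ (y - A *ᵥ βhat) = 0 := by
    rw [mulVec_sub, mulVec_mulVec, mulVec_mulVec, mul_nonsing_inv _ hA, one_mulVec, sub_self]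
  have hrss : (y - A *ᵥ βhat) ⬝ᵥ (y - A *ᵥ βhat) = y ⬝ᵥ (y - A *ᵥ βhat) := by
    rw [sub_dotProduct, dotProduct_comm (A *ᵥ βhat), ← dotProduct_transpose_mulVec, hr,
      dotProduct_zero, sub_zero]
  have hsplit : y - A *ᵥ β = (y - A *ᵥ βhat) - A *ᵥ (β - βhat) := by
    rw [mulVec_sub]; abel
  rw [hsplit, sub_mulVec_dotProduct_self_of_transpose_mulVec_eq_zero A hr, hrss, hproj]

end LeastSquares

section Gaussian

variable {ι : Type*} [Fintype ι]

theorem exp_neg_mul_dotProduct_self_eq_prod (b : ℝ) (v : ι → ℝ) :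
    exp (-b * (v ⬝ᵥ v)) = ∏ i, exp (-b * v i ^ 2) := by
  rw [← exp_sum, dotProduct, Finset.mul_sum]
  simp only [sq]

theorem integrable_exp_neg_mul_dotProduct_self {b : ℝ} (hb : 0 < b) :
    Integrable fun v : ι → ℝ ↦ exp (-b * (v ⬝ᵥ v)) := by
  simp_rw [exp_neg_mul_dotProduct_self_eq_prod]
  exact Integrable.fintype_prod (f := fun _ x ↦ exp (-b * x ^ 2))
    fun _ ↦ integrable_exp_neg_mul_sq hb

theorem integral_exp_neg_mul_dotProduct_self (b : ℝ) :
    ∫ v : ι → ℝ, exp (-b * (v ⬝ᵥ v)) = √(π / b) ^ Fintype.card ι := by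
  simp_rw [exp_neg_mul_dotProduct_self_eq_prod]
  rw [integral_fintype_prod_volume_eq_pow (fun x ↦ exp (-b * x ^ 2)), integral_gaussian]

variable [DecidableEq ι] {B : Matrix ι ι ℝ} {E : Type*} [NormedAddCommGroup E]

theorem measurableEmbedding_mulVec (hB : B.det ≠ 0) : MeasurableEmbedding (B *ᵥ ·) :=
  (B.toLinearEquiv' (B.invertibleOfIsUnitDet hB.isUnit)).toContinuousLinearEquiv.toHomeomorph
    |>.measurableEmbedding

theorem map_mulVec_volume (hB : B.det ≠ 0) :
    Measure.map (B *ᵥ ·) volume = ENNReal.ofReal |B.det|⁻¹ • (volume : Measure (ι → ℝ)) := by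
  have := Real.map_linearMap_volume_pi_eq_smul_volume_pi (f := B.toLin')
    (by rwa [LinearMap.det_toLin'])
  rwa [LinearMap.det_toLin', abs_inv] at this

theorem integral_comp_mulVec [NormedSpace ℝ E] (hB : B.det ≠ 0) (g : (ι → ℝ) → E) :
    ∫ v, g (B *ᵥ v) = |B.det|⁻¹ • ∫ w, g w := by
  rw [← (measurableEmbedding_mulVec hB).integral_map, map_mulVec_volume hB,
    integral_smul_measure, ENNReal.toReal_ofReal (by positivity)]

theorem integrable_comp_mulVec_iff (hB : B.det ≠ 0) {g : (ι → ℝ) → E} :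
    Integrable (fun v ↦ g (B *ᵥ v)) ↔ Integrable g := by
  rw [← Function.comp_def, ← (measurableEmbedding_mulVec hB).integrable_map_iff,
    map_mulVec_volume hB, integrable_smul_measure (by simpa using hB) ENNReal.ofReal_ne_top]

theorem Matrix.PosDef.exists_eq_transpose_mul_self {M : Matrix ι ι ℝ} (hM : M.PosDef) :
    ∃ B : Matrix ι ι ℝ, B.det ≠ 0 ∧ M = Bᵀ * B := by
  open scoped MatrixOrder in
  obtain ⟨B, rfl⟩ := CStarAlgebra.nonneg_iff_eq_star_mul_self.mp hM.posSemidef.nonneg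
  refine ⟨B, fun h ↦ hM.det_pos.ne' ?_, by simp [star_eq_conjTranspose]⟩
  simp [star_eq_conjTranspose, h]

theorem integral_exp_neg_mul_dotProduct_mulVec {M : Matrix ι ι ℝ} (hM : M.PosDef) (b : ℝ) :
    ∫ v : ι → ℝ, exp (-b * (v ⬝ᵥ M *ᵥ v)) = √(π / b) ^ Fintype.card ι / √M.det := by
  obtain ⟨B, hB, rfl⟩ := hM.exists_eq_transpose_mul_self
  simp_rw [← mulVec_dotProduct_mulVec_self]
  rw [integral_comp_mulVec hB fun w ↦ exp (-b * (w ⬝ᵥ w)), integral_exp_neg_mul_dotProduct_self,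
    det_mul, det_transpose, sqrt_mul_self_eq_abs, smul_eq_mul, inv_mul_eq_div]

theorem integrable_exp_neg_mul_dotProduct_mulVec {M : Matrix ι ι ℝ} (hM : M.PosDef) {b : ℝ}
    (hb : 0 < b) : Integrable fun v : ι → ℝ ↦ exp (-b * (v ⬝ᵥ M *ᵥ v)) := by
  obtain ⟨B, hB, rfl⟩ := hM.exists_eq_transpose_mul_self
  simp_rw [← mulVec_dotProduct_mulVec_self]
  exact (integrable_comp_mulVec_iff hB (g := fun w ↦ exp (-b * (w ⬝ᵥ w)))).mpr
    (integrable_exp_neg_mul_dotProduct_self hb)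

end Gaussian

section InverseGamma

/-- The integrand in the shape produced by the substitution `σ = u⁻¹`
(`integral_comp_rpow_Ioi` with `p = -1`) in `∫ u ^ (k - 1) * exp (-a * u ^ 2)`. -/
theorem rpow_neg_add_one_mul_exp_neg_div_sq_eq_smul {k a x : ℝ} (hx : 0 < x) :
    x ^ (-(k + 1)) * exp (-a / x ^ 2) =
      (|(-1 : ℝ)| * x ^ ((-1 : ℝ) - 1)) •
        ((x ^ (-1 : ℝ)) ^ (k - 1) * exp (-a * (x ^ (-1 : ℝ)) ^ (2 : ℝ))) := by
  symm
  rw [← rpow_mul hx.le, ← rpow_mul hx.le, smul_eq_mul, abs_neg, abs_one, one_mul, ← mul_assoc,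
    ← rpow_add hx, show (-1 : ℝ) - 1 + -1 * (k - 1) = -(k + 1) by ring,
    show (-1 : ℝ) * 2 = -(2 : ℕ) by norm_num, rpow_neg hx.le (2 : ℕ), rpow_natCast,
    div_eq_mul_inv, neg_mul]

theorem integral_rpow_neg_mul_exp_neg_div_sq {k a : ℝ} (hk : 0 < k) (ha : 0 < a) :
    ∫ σ in Ioi (0 : ℝ), σ ^ (-(k + 1)) * exp (-a / σ ^ 2) = a ^ (-k / 2) / 2 * Gamma (k / 2) := by
  rw [setIntegral_congr_fun measurableSet_Ioi
      fun x hx ↦ rpow_neg_add_one_mul_exp_neg_div_sq_eq_smul hx,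
    integral_comp_rpow_Ioi (fun u ↦ u ^ (k - 1) * exp (-a * u ^ (2 : ℝ))) (by norm_num),
    integral_rpow_mul_exp_neg_mul_rpow two_pos (by linarith) ha]
  ring_nf

theorem integrableOn_rpow_neg_mul_exp_neg_div_sq {k a : ℝ} (hk : 0 < k) (ha : 0 < a) :
    IntegrableOn (fun σ ↦ σ ^ (-(k + 1)) * exp (-a / σ ^ 2)) (Ioi 0) := by
  refine IntegrableOn.congr_fun ?_
    (fun x hx ↦ (rpow_neg_add_one_mul_exp_neg_div_sq_eq_smul hx).symm) measurableSet_Ioi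
  exact (integrableOn_Ioi_comp_rpow_iff _ (by norm_num)).mpr
    (integrableOn_rpow_mul_exp_neg_mul_rpow (by linarith) two_pos ha)

end InverseGamma

theorem integral_integral_swap_of_nonneg {α β : Type*} [MeasurableSpace α] [MeasurableSpace β]
    {μ : Measure α} {ν : Measure β} [SFinite μ] [SFinite ν] {f : α → β → ℝ}
    (hf : AEStronglyMeasurable (Function.uncurry f) (μ.prod ν)) (hf₀ : ∀ᵐ y ∂ν, ∀ x, 0 ≤ f x y)
    (hsec : ∀ᵐ y ∂ν, Integrable (f · y) μ) (hint : Integrable (fun y ↦ ∫ x, f x y ∂μ) ν) :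
    ∫ x, ∫ y, f x y ∂ν ∂μ = ∫ y, ∫ x, f x y ∂μ ∂ν := by
  refine integral_integral_swap ((integrable_prod_iff' hf).mpr ⟨hsec, hint.congr ?_⟩)
  filter_upwards [hf₀] with y hy
  exact integral_congr_ae (.of_forall fun x ↦ (Real.norm_of_nonneg (hy x)).symm)

section LeastSquaresGaussian

variable {ι κ : Type*} [Fintype ι] [Fintype κ] [DecidableEq ι] [DecidableEq κ]
  {A : Matrix ι κ ℝ}

theorem exp_neg_dotProduct_self_sub_mulVec_div (hA : IsUnit (Aᵀ * A).det) (y : ι → ℝ)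
    (β : κ → ℝ) (s : ℝ) :
    exp (-((y - A *ᵥ β) ⬝ᵥ (y - A *ᵥ β)) / s) =
      exp (-(y ⬝ᵥ (1 - A * (Aᵀ * A)⁻¹ * Aᵀ) *ᵥ y) / s) *
        exp (-s⁻¹ * ((β - (Aᵀ * A)⁻¹ *ᵥ Aᵀ *ᵥ y) ⬝ᵥ (Aᵀ * A) *ᵥ (β - (Aᵀ * A)⁻¹ *ᵥ Aᵀ *ᵥ y))) := by
  rw [dotProduct_self_sub_mulVec_eq A hA y β, ← exp_add]
  ring_nf

theorem integral_exp_neg_dotProduct_self_sub_mulVec_div (hA : (Aᵀ * A).PosDef) (y : ι → ℝ)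
    (s : ℝ) :
    ∫ β : κ → ℝ, exp (-((y - A *ᵥ β) ⬝ᵥ (y - A *ᵥ β)) / s) =
      exp (-(y ⬝ᵥ (1 - A * (Aᵀ * A)⁻¹ * Aᵀ) *ᵥ y) / s) * √(π * s) ^ Fintype.card κ /
        √(Aᵀ * A).det := by
  simp_rw [exp_neg_dotProduct_self_sub_mulVec_div hA.det_pos.ne'.isUnit y _ s]
  rw [integral_const_mul, integral_sub_right_eq_self (fun v ↦ exp (-s⁻¹ * (v ⬝ᵥ (Aᵀ * A) *ᵥ v))),
    integral_exp_neg_mul_dotProduct_mulVec hA, div_inv_eq_mul, mul_div_assoc]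

theorem integrable_exp_neg_dotProduct_self_sub_mulVec_div (hA : (Aᵀ * A).PosDef) (y : ι → ℝ)
    {s : ℝ} (hs : 0 < s) :
    Integrable fun β : κ → ℝ ↦ exp (-((y - A *ᵥ β) ⬝ᵥ (y - A *ᵥ β)) / s) := by
  simp_rw [exp_neg_dotProduct_self_sub_mulVec_div hA.det_pos.ne'.isUnit y _ s]
  exact ((integrable_exp_neg_mul_dotProduct_mulVec hA (inv_pos.mpr hs)).comp_sub_right _).const_mul
    _

theorem integral_rpow_mul_exp_neg_dotProduct_self_sub_mulVec_div_sq (hA : (Aᵀ * A).PosDef)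
    (y : ι → ℝ) {σ : ℝ} (hσ : 0 < σ) (p : ℝ) :
    ∫ β : κ → ℝ, σ ^ p * exp (-((y - A *ᵥ β) ⬝ᵥ (y - A *ᵥ β)) / (2 * σ ^ 2)) =
      √(2 * π) ^ Fintype.card κ / √(Aᵀ * A).det *
        (σ ^ (p + Fintype.card κ) *
          exp (-(y ⬝ᵥ (1 - A * (Aᵀ * A)⁻¹ * Aᵀ) *ᵥ y / 2) / σ ^ 2)) := by
  have hsqrt : √(π * (2 * σ ^ 2)) = √(2 * π) * σ := by
    rw [show π * (2 * σ ^ 2) = 2 * π * σ ^ 2 by ring, sqrt_mul (by positivity), sqrt_sq hσ.le]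
  rw [integral_const_mul, integral_exp_neg_dotProduct_self_sub_mulVec_div hA, hsqrt,
    rpow_add hσ, rpow_natCast]
  ring_nf

theorem integral_integral_rpow_mul_exp_neg_dotProduct_self_sub_mulVec_div_sq
    (hA : (Aᵀ * A).PosDef) (y : ι → ℝ) (hRSS : 0 < y ⬝ᵥ (1 - A * (Aᵀ * A)⁻¹ * Aᵀ) *ᵥ y) {p : ℝ}
    (hp : Fintype.card κ < p) :
    ∫ β : κ → ℝ, ∫ σ in Ioi (0 : ℝ),
        σ ^ (-(p + 1)) * exp (-((y - A *ᵥ β) ⬝ᵥ (y - A *ᵥ β)) / (2 * σ ^ 2)) =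
      √(2 * π) ^ Fintype.card κ / √(Aᵀ * A).det *
        ((y ⬝ᵥ (1 - A * (Aᵀ * A)⁻¹ * Aᵀ) *ᵥ y / 2) ^ (-(p - Fintype.card κ) / 2) / 2 *
          Gamma ((p - Fintype.card κ) / 2)) := by
  set RSS := y ⬝ᵥ (1 - A * (Aᵀ * A)⁻¹ * Aᵀ) *ᵥ y
  have hk : 0 < p - Fintype.card κ := sub_pos.mpr hp
  have hinner : ∀ σ ∈ Ioi (0 : ℝ), ∫ β : κ → ℝ,
      σ ^ (-(p + 1)) * exp (-((y - A *ᵥ β) ⬝ᵥ (y - A *ᵥ β)) / (2 * σ ^ 2)) =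
        √(2 * π) ^ Fintype.card κ / √(Aᵀ * A).det *
          (σ ^ (-((p - Fintype.card κ) + 1)) * exp (-(RSS / 2) / σ ^ 2)) := by
    intro σ hσ
    rw [integral_rpow_mul_exp_neg_dotProduct_self_sub_mulVec_div_sq hA y hσ,
      show -(p + 1) + Fintype.card κ = -((p - Fintype.card κ) + 1) by ring]
  rw [integral_integral_swap_of_nonneg ?meas ?nonneg ?sec ?int,
    setIntegral_congr_fun measurableSet_Ioi hinner, integral_const_mul,
    integral_rpow_neg_mul_exp_neg_div_sq hk (half_pos hRSS)]
  case meas =>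
    apply Measurable.aestronglyMeasurable
    fun_prop
  case nonneg =>
    filter_upwards [ae_restrict_mem measurableSet_Ioi] with σ (hσ : 0 < σ) β
    positivity
  case sec =>
    filter_upwards [ae_restrict_mem measurableSet_Ioi] with σ (hσ : 0 < σ)
    exact (integrable_exp_neg_dotProduct_self_sub_mulVec_div hA y (by positivity)).const_mul _
  case int =>
    refine ((integrableOn_rpow_neg_mul_exp_neg_div_sq hk (half_pos hRSS)).const_mul
      (√(2 * π) ^ Fintype.card κ / √(Aᵀ * A).det)).congr ?_
    filter_upwards [ae_restrict_mem measurableSet_Ioi] with σ hσ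
    exact (hinner σ hσ).symm

end LeastSquaresGaussian

/-- the normalizing constant of the generalized fiducial density of
`(β, σ)` in the linear model (without the admissibility factor):
`∫∫ σ^{-(n+1)} e^{-‖y-Aβ‖²/(2σ²)} √det(AᵀA) √RSS dσ dβ
  = 2^{(n-2)/2} π^{m/2} Γ((n-m)/2) RSS^{-(n-m-1)/2}`. -/
theorem fiducial_normalizing_constant
    (n m : ℕ) (hmn : m < n)
    (A : Matrix (Fin n) (Fin m) ℝ) (hA : (Aᵀ * A).PosDef)
    (H : Matrix (Fin n) (Fin n) ℝ) (hH : H = A * (Aᵀ * A)⁻¹ * Aᵀ)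
    (y : Fin n → ℝ) (RSS : ℝ) (hRSS : RSS = y ⬝ᵥ (1 - H) *ᵥ y) (hpos : 0 < RSS) :
    (∫ β : Fin m → ℝ, ∫ σ in Set.Ioi (0 : ℝ),
        σ ^ (-((n : ℝ) + 1)) *
          Real.exp (-(∑ i, (y i - (A *ᵥ β) i) ^ 2) / (2 * σ ^ 2)) *
          Real.sqrt (Aᵀ * A).det * Real.sqrt RSS) =
      2 ^ (((n : ℝ) - 2) / 2) * π ^ ((m : ℝ) / 2) *
        Real.Gamma (((n : ℝ) - m) / 2) * RSS ^ (-(((n : ℝ) - m - 1) / 2)) := by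
  have hsum (β : Fin m → ℝ) : ∑ i, (y i - (A *ᵥ β) i) ^ 2 = (y - A *ᵥ β) ⬝ᵥ (y - A *ᵥ β) := by
    simp only [dotProduct, Pi.sub_apply, sq]
  have hsqrt : √(2 * π) ^ m = 2 ^ ((m : ℝ) / 2) * π ^ ((m : ℝ) / 2) := by
    rw [← rpow_natCast, sqrt_eq_rpow, ← rpow_mul (by positivity), mul_rpow zero_le_two pi_pos.le,
      one_div_mul_eq_div]
  simp_rw [hsum, integral_mul_const]
  rw [integral_integral_rpow_mul_exp_neg_dotProduct_self_sub_mulVec_div_sq hA y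
    (hH ▸ hRSS ▸ hpos) (by simpa using hmn), ← hH, ← hRSS, Fintype.card_fin, hsqrt,
    div_rpow hpos.le zero_le_two, sqrt_eq_rpow RSS,
    show ((n : ℝ) - 2) / 2 = m / 2 - -((n : ℝ) - m) / 2 - 1 by ring,
    show -(((n : ℝ) - m - 1) / 2) = 1 / 2 + -((n : ℝ) - m) / 2 by ring,
    rpow_sub two_pos, rpow_sub two_pos, rpow_one, rpow_add hpos]
  field_simp [(sqrt_pos.mpr hA.det_pos).ne']
end
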